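/- arXiv:2512.22062 — 10 statements merged into one kernel-verified Lean document; each statement's English description precedes it below -/
import Mathlib

section
/- Let X and Y be real normed spaces, and let ρ > 0, c > 0, C ≥ 0 and L ≥ 0 be real numbers. Let ξ : X → ℝ satisfy: 0 ≤ ξ(u) ≤ 1 for all u ∈ X; ξ(u) = 0 whenever ‖u‖ ≥ c·ρ; and |ξ(u) − ξ(v)| ≤ (C/ρ)·‖u − v‖ for all u, v ∈ X. Let R : X → Y satisfy R(0) = 0 and ‖R(u) − R(v)‖ ≤ L·‖u − v‖ for all u, v in the closed ball of radius c·ρ centered at 0. Then the map u ↦ ξ(u) • R(u) is globally Lipschitz on X with Lipschitz constant at most L·(1 + c·C). -/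
/-- Core estimate for Lipschitz constants of cut-off nonlinearities (Lemma 6.1). -/
theorem cutoff_lipschitz {X Y : Type*} [NormedAddCommGroup X] [NormedSpace ℝ X]
    [NormedAddCommGroup Y] [NormedSpace ℝ Y]
    (ρ c C L : ℝ) (hρ : 0 < ρ) (hc : 0 < c) (hC : 0 ≤ C) (hL : 0 ≤ L)
    (ξ : X → ℝ) (R : X → Y)
    (hξ01 : ∀ u : X, 0 ≤ ξ u ∧ ξ u ≤ 1)
    (hξ0 : ∀ u : X, c * ρ ≤ ‖u‖ → ξ u = 0)
    (hξlip : ∀ u v : X, |ξ u - ξ v| ≤ (C / ρ) * ‖u - v‖)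
    (hR0 : R 0 = 0)
    (hRlip : ∀ u v : X, ‖u‖ ≤ c * ρ → ‖v‖ ≤ c * ρ → ‖R u - R v‖ ≤ L * ‖u - v‖) :
    ∀ u v : X, ‖ξ u • R u - ξ v • R v‖ ≤ L * (1 + c * C) * ‖u - v‖ := by
  have hcρ : (0:ℝ) ≤ c * ρ := by positivity
  have hCρ : C / ρ * ρ = C := div_mul_cancel₀ C hρ.ne'
  have hRnorm : ∀ w : X, ‖w‖ ≤ c * ρ → ‖R w‖ ≤ L * (c * ρ) := by
    intro w hw
    have h := hRlip w 0 hw (by simpa using hcρ)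
    rw [hR0, sub_zero, sub_zero] at h
    exact h.trans (by nlinarith)
  have key : ∀ u v : X, ‖v‖ ≤ c * ρ →
      ‖ξ u • R u - ξ v • R v‖ ≤ L * (1 + c * C) * ‖u - v‖ := by
    intro u v hv
    rcases le_or_gt ‖u‖ (c * ρ) with hu | hu
    · have hsplit : ξ u • R u - ξ v • R v = ξ u • (R u - R v) + (ξ u - ξ v) • R v := by
        module
      rw [hsplit]
      have h1 : ‖ξ u • (R u - R v)‖ ≤ 1 * (L * ‖u - v‖) := by
        rw [norm_smul]
        apply mul_le_mul _ (hRlip u v hu hv) (norm_nonneg _) zero_le_one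
        rw [Real.norm_eq_abs, abs_of_nonneg (hξ01 u).1]
        exact (hξ01 u).2
      have h2 : ‖(ξ u - ξ v) • R v‖ ≤ (C / ρ * ‖u - v‖) * (L * (c * ρ)) := by
        rw [norm_smul]
        exact mul_le_mul (hξlip u v) (hRnorm v hv) (norm_nonneg _)
          (by positivity)
      calc ‖ξ u • (R u - R v) + (ξ u - ξ v) • R v‖
          ≤ ‖ξ u • (R u - R v)‖ + ‖(ξ u - ξ v) • R v‖ := norm_add_le _ _
        _ ≤ 1 * (L * ‖u - v‖) + (C / ρ * ‖u - v‖) * (L * (c * ρ)) := add_le_add h1 h2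
        _ = L * (1 + c * C) * ‖u - v‖ := by
            field_simp
    · have hξu : ξ u = 0 := hξ0 u hu.le
      rw [hξu, zero_smul, zero_sub, norm_neg, norm_smul, Real.norm_eq_abs,
        abs_of_nonneg (hξ01 v).1]
      have hξv : ξ v ≤ C / ρ * ‖u - v‖ := by
        have := hξlip v u
        rw [norm_sub_rev] at this
        calc ξ v = |ξ v - ξ u| := by rw [hξu, sub_zero, abs_of_nonneg (hξ01 v).1]
          _ ≤ C / ρ * ‖u - v‖ := this
      calc ξ v * ‖R v‖ ≤ (C / ρ * ‖u - v‖) * (L * (c * ρ)) :=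
            mul_le_mul hξv (hRnorm v hv) (norm_nonneg _) (by positivity)
        _ = L * (c * (C / ρ * ρ)) * ‖u - v‖ := by ring
        _ = L * (c * C) * ‖u - v‖ := by rw [hCρ]
        _ ≤ L * (1 + c * C) * ‖u - v‖ := by nlinarith [norm_nonneg (u - v), mul_nonneg hL (norm_nonneg (u - v))]
  intro u v
  rcases le_or_gt ‖v‖ (c * ρ) with hv | hv
  · exact key u v hv
  · rcases le_or_gt ‖u‖ (c * ρ) with hu | hu
    · rw [norm_sub_rev, norm_sub_rev u v]
      exact key v u hu
    · rw [hξ0 u hu.le, hξ0 v hv.le]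
      simp [norm_nonneg, mul_nonneg, hL, hc.le, hC]
      positivity
end

section
/- Let X and Y be real normed spaces and P : X → X a continuous linear projection (P ∘ P = P). Let χ : ℝ → ℝ satisfy: χ(y) = 1 for y ≤ 1; 0 ≤ χ(y) ≤ 1 for all y; χ(y) = 0 for y ≥ 2; and |χ(y₁) − χ(y₂)| ≤ 2|y₁ − y₂| for all y₁, y₂ ∈ ℝ. Let R : X → Y be continuously Fréchet differentiable with R(0) = 0 and DR(0) = 0. For ρ > 0 define R_ρ : X → Y by R_ρ(u) := χ(‖Pu‖/ρ)·χ(‖u − Pu‖/ρ) • R(u). Then: (i) R_ρ(u) = 0 whenever ‖u‖ ≥ 4ρ; (ii) R_ρ is globally Lipschitz, with Lipschitz constant at most (1 + 8(1 + 2‖P‖))·L whenever L is a Lipschitz constant of R on the closed ball of radius 4ρ centered at 0; (iii) for every ε > 0 there exists ρ₀ > 0 such that for every ρ ∈ (0, ρ₀] the map R_ρ is globally Lipschitz with Lipschitz constant ε. -/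
/-!
Write `ξ_ρ(u) = χ(‖Pu‖/ρ) χ(‖u - Pu‖/ρ)`. Since `‖u‖ ≤ ‖Pu‖ + ‖u - Pu‖`, one of the two factors
vanishes once `‖u‖ ≥ 4ρ`; both factors are bounded by `1`, and they are Lipschitz with constants
`2‖P‖/ρ` and `2(1 + ‖P‖)/ρ`, so `ξ_ρ` is `2(1 + 2‖P‖)/ρ`-Lipschitz. Splitting
`ξ_ρ(u) R(u) - ξ_ρ(v) R(v) = ξ_ρ(u) (R(u) - R(v)) + (ξ_ρ(u) - ξ_ρ(v)) R(v)` and using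
`‖R(v)‖ ≤ 4ρL` on the support of `ξ_ρ` gives the Lipschitz constant `(1 + 8(1 + 2‖P‖)) L`.
Finally `R` is strictly differentiable at `0` with derivative `0`, so it is `ε`-Lipschitz on small
balls around `0`, and (ii) turns this into (iii).
-/

open Metric

theorem abs_mul_sub_mul_le_of_abs_le_one {a₁ a₂ b₁ b₂ : ℝ} (ha₂ : |a₂| ≤ 1) (hb₁ : |b₁| ≤ 1) :
    |a₁ * a₂ - b₁ * b₂| ≤ |a₁ - b₁| + |a₂ - b₂| :=
  calc |a₁ * a₂ - b₁ * b₂| = |(a₁ - b₁) * a₂ + b₁ * (a₂ - b₂)| := by ring_nf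
    _ ≤ |a₁ - b₁| * |a₂| + |b₁| * |a₂ - b₂| := by
        rw [← abs_mul, ← abs_mul]
        exact abs_add_le _ _
    _ ≤ |a₁ - b₁| + |a₂ - b₂| :=
        add_le_add (mul_le_of_le_one_right (abs_nonneg _) ha₂)
          (mul_le_of_le_one_left (abs_nonneg _) hb₁)

theorem abs_sub_comp_div_le {χ : ℝ → ℝ} {c ρ : ℝ}
    (hχ : ∀ y₁ y₂ : ℝ, |χ y₁ - χ y₂| ≤ c * |y₁ - y₂|) (hρ : 0 < ρ) (s t : ℝ) :
    |χ (s / ρ) - χ (t / ρ)| ≤ c / ρ * |s - t| :=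
  calc |χ (s / ρ) - χ (t / ρ)| ≤ c * |s / ρ - t / ρ| := hχ _ _
    _ = c / ρ * |s - t| := by rw [← sub_div, abs_div, abs_of_pos hρ]; ring

theorem HasStrictFDerivAt.exists_norm_sub_le_on_closedBall {E F : Type*}
    [NormedAddCommGroup E] [NormedSpace ℝ E] [NormedAddCommGroup F] [NormedSpace ℝ F]
    {f : E → F} {x : E} (hf : HasStrictFDerivAt f (0 : E →L[ℝ] F) x) {ε : ℝ} (hε : 0 < ε) :
    ∃ δ > 0, ∀ y ∈ closedBall x δ, ∀ z ∈ closedBall x δ, ‖f y - f z‖ ≤ ε * ‖y - z‖ := by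
  obtain ⟨s, hs, hlip⟩ :=
    hf.exists_lipschitzOnWith_of_nnnorm_lt ε.toNNReal (by simpa using hε)
  obtain ⟨δ, hδ, hball⟩ := Metric.mem_nhds_iff.1 hs
  refine ⟨δ / 2, half_pos hδ, fun y hy z hz => ?_⟩
  have hsub : closedBall x (δ / 2) ⊆ s :=
    (closedBall_subset_ball (half_lt_self hδ)).trans hball
  simpa [Real.coe_toNNReal _ hε.le] using hlip.norm_sub_le (hsub hy) (hsub hz)

theorem nonneg_of_norm_sub_le_mul_on_closedBall {X Y : Type*} [NormedAddCommGroup X]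
    [NormedSpace ℝ X] [Nontrivial X] [SeminormedAddGroup Y] {R : X → Y} {L r : ℝ} (hr : 0 < r)
    (hL : ∀ u v : X, ‖u‖ ≤ r → ‖v‖ ≤ r → ‖R u - R v‖ ≤ L * ‖u - v‖) : 0 ≤ L := by
  obtain ⟨w, hw⟩ := exists_norm_eq X hr.le
  have h := hL w 0 hw.le (by simpa using hr.le)
  rw [sub_zero, hw] at h
  exact nonneg_of_mul_nonneg_left ((norm_nonneg _).trans h) hr

section SmulCutoff

variable {X Y : Type*} [NormedAddCommGroup X] [NormedAddCommGroup Y] [NormedSpace ℝ Y]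
  {R : X → Y} {L r : ℝ} {ξ : X → ℝ} {K : ℝ}
variable (hξ : ∀ u, |ξ u| ≤ 1) (hξlip : ∀ u v, |ξ u - ξ v| ≤ K * ‖u - v‖)
  (hsupp : ∀ u, ξ u ≠ 0 → ‖u‖ ≤ r) (hR0 : R 0 = 0)
  (hL : ∀ u v : X, ‖u‖ ≤ r → ‖v‖ ≤ r → ‖R u - R v‖ ≤ L * ‖u - v‖)
include hξ hξlip hsupp hR0 hL

theorem norm_smul_sub_smul_le_of_norm_le (hL0 : 0 ≤ L) (u : X) {v : X} (hv : ‖v‖ ≤ r) :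
    ‖ξ u • R u - ξ v • R v‖ ≤ (1 + K * r) * L * ‖u - v‖ := by
  have hRv : ‖R v‖ ≤ L * r := by
    have h := hL v 0 hv (by rw [norm_zero]; exact (norm_nonneg v).trans hv)
    rw [hR0, sub_zero, sub_zero] at h
    exact h.trans (mul_le_mul_of_nonneg_left hv hL0)
  have hfirst : ‖ξ u • (R u - R v)‖ ≤ L * ‖u - v‖ := by
    by_cases hu : ξ u = 0
    · rw [hu, zero_smul, norm_zero]
      positivity
    rw [norm_smul, Real.norm_eq_abs]
    exact (mul_le_mul (hξ u) (hL u v (hsupp u hu) hv) (norm_nonneg _) zero_le_one).trans_eq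
      (one_mul _)
  have hsecond : ‖(ξ u - ξ v) • R v‖ ≤ K * ‖u - v‖ * (L * r) := by
    rw [norm_smul, Real.norm_eq_abs]
    exact mul_le_mul (hξlip u v) hRv (norm_nonneg _) ((abs_nonneg _).trans (hξlip u v))
  calc ‖ξ u • R u - ξ v • R v‖ = ‖ξ u • (R u - R v) + (ξ u - ξ v) • R v‖ := by
        rw [smul_sub, sub_smul, sub_add_sub_cancel]
    _ ≤ L * ‖u - v‖ + K * ‖u - v‖ * (L * r) := (norm_add_le _ _).trans (add_le_add hfirst hsecond)
    _ = (1 + K * r) * L * ‖u - v‖ := by ring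

theorem norm_smul_sub_smul_le [NormedSpace ℝ X] (hr : 0 < r) (u v : X) :
    ‖ξ u • R u - ξ v • R v‖ ≤ (1 + K * r) * L * ‖u - v‖ := by
  rcases eq_or_ne u v with rfl | huv
  · simp
  have : Nontrivial X := ⟨⟨u, v, huv⟩⟩
  have hL0 := nonneg_of_norm_sub_le_mul_on_closedBall hr hL
  by_cases hv : ξ v = 0
  · by_cases hu : ξ u = 0
    · rw [hu, hv, zero_smul, zero_smul, sub_zero, norm_zero]
      have hK0 : 0 ≤ K := nonneg_of_mul_nonneg_left ((abs_nonneg _).trans (hξlip u v))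
        (norm_pos_iff.2 (sub_ne_zero.2 huv))
      positivity
    rw [← norm_neg, neg_sub, norm_sub_rev u v]
    exact norm_smul_sub_smul_le_of_norm_le hξ hξlip hsupp hR0 hL hL0 v (hsupp u hu)
  exact norm_smul_sub_smul_le_of_norm_le hξ hξlip hsupp hR0 hL hL0 u (hsupp v hv)

end SmulCutoff

section Cutoff

variable {X : Type*} [NormedAddCommGroup X] [NormedSpace ℝ X]
  {χ : ℝ → ℝ} {P : X →L[ℝ] X} {ρ : ℝ}

noncomputable def cutoff (χ : ℝ → ℝ) (P : X →L[ℝ] X) (ρ : ℝ) (u : X) : ℝ :=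
  χ (‖P u‖ / ρ) * χ (‖u - P u‖ / ρ)

theorem cutoff_eq_zero_of_le_norm (hχ0 : ∀ y : ℝ, 2 ≤ y → χ y = 0) (hρ : 0 < ρ) {u : X}
    (hu : 4 * ρ ≤ ‖u‖) : cutoff χ P ρ u = 0 := by
  have hsplit : ‖u‖ ≤ ‖P u‖ + ‖u - P u‖ := norm_le_norm_add_norm_sub' u (P u)
  rcases le_or_gt (2 * ρ) ‖P u‖ with hPu | hPu
  · rw [cutoff, hχ0 _ ((le_div_iff₀ hρ).2 (by linarith)), zero_mul]
  · rw [cutoff, hχ0 (‖u - P u‖ / ρ) ((le_div_iff₀ hρ).2 (by linarith)), mul_zero]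

theorem norm_le_of_cutoff_ne_zero (hχ0 : ∀ y : ℝ, 2 ≤ y → χ y = 0) (hρ : 0 < ρ) {u : X}
    (hu : cutoff χ P ρ u ≠ 0) : ‖u‖ ≤ 4 * ρ := by
  contrapose! hu
  exact cutoff_eq_zero_of_le_norm hχ0 hρ hu.le

theorem abs_cutoff_le_one (hχ : ∀ y : ℝ, |χ y| ≤ 1) (u : X) : |cutoff χ P ρ u| ≤ 1 := by
  rw [cutoff, abs_mul]
  exact mul_le_one₀ (hχ _) (abs_nonneg _) (hχ _)

theorem abs_cutoff_sub_le {c : ℝ} (hχ : ∀ y : ℝ, |χ y| ≤ 1)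
    (hχlip : ∀ y₁ y₂ : ℝ, |χ y₁ - χ y₂| ≤ c * |y₁ - y₂|) (hρ : 0 < ρ) (u v : X) :
    |cutoff χ P ρ u - cutoff χ P ρ v| ≤ c * (1 + 2 * ‖P‖) / ρ * ‖u - v‖ := by
  have hc : 0 ≤ c := by simpa using (abs_nonneg _).trans (hχlip 1 0)
  have hP : |‖P u‖ - ‖P v‖| ≤ ‖P‖ * ‖u - v‖ :=
    calc |‖P u‖ - ‖P v‖| ≤ ‖P u - P v‖ := abs_norm_sub_norm_le _ _
      _ ≤ ‖P‖ * ‖u - v‖ := by rw [← map_sub]; exact P.le_opNorm _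
  have hQ : |‖u - P u‖ - ‖v - P v‖| ≤ (1 + ‖P‖) * ‖u - v‖ :=
    calc |‖u - P u‖ - ‖v - P v‖| ≤ ‖(u - v) - P (u - v)‖ := by
          rw [map_sub, sub_sub_sub_comm]; exact abs_norm_sub_norm_le _ _
      _ ≤ ‖u - v‖ + ‖P‖ * ‖u - v‖ := (norm_sub_le _ _).trans (by gcongr; exact P.le_opNorm _)
      _ = (1 + ‖P‖) * ‖u - v‖ := by ring
  calc |cutoff χ P ρ u - cutoff χ P ρ v|
      ≤ |χ (‖P u‖ / ρ) - χ (‖P v‖ / ρ)| + |χ (‖u - P u‖ / ρ) - χ (‖v - P v‖ / ρ)| :=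
        abs_mul_sub_mul_le_of_abs_le_one (hχ _) (hχ _)
    _ ≤ c / ρ * (‖P‖ * ‖u - v‖) + c / ρ * ((1 + ‖P‖) * ‖u - v‖) := by
        gcongr
        · exact (abs_sub_comp_div_le hχlip hρ _ _).trans (by gcongr)
        · exact (abs_sub_comp_div_le hχlip hρ _ _).trans (by gcongr)
    _ = c * (1 + 2 * ‖P‖) / ρ * ‖u - v‖ := by ring

end Cutoff

theorem cutoff_nonlinearity_general {X Y : Type*} [NormedAddCommGroup X] [NormedSpace ℝ X]
    [NormedAddCommGroup Y] [NormedSpace ℝ Y]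
    (P : X →L[ℝ] X)
    (χ : ℝ → ℝ)
    (hχ01 : ∀ y : ℝ, 0 ≤ χ y ∧ χ y ≤ 1)
    (hχ0 : ∀ y : ℝ, 2 ≤ y → χ y = 0)
    (hχlip : ∀ y₁ y₂ : ℝ, |χ y₁ - χ y₂| ≤ 2 * |y₁ - y₂|)
    (R : X → Y) (hR : ContDiff ℝ 1 R) (hR0 : R 0 = 0)
    (hDR0 : fderiv ℝ R 0 = 0)
    (Rρ : ℝ → X → Y)
    (hRρ : ∀ ρ : ℝ, ∀ u : X,
      Rρ ρ u = (χ (‖P u‖ / ρ) * χ (‖u - P u‖ / ρ)) • R u) :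
    (∀ ρ : ℝ, 0 < ρ → ∀ u : X, 4 * ρ ≤ ‖u‖ → Rρ ρ u = 0) ∧
    (∀ ρ : ℝ, 0 < ρ → ∀ L : ℝ,
      (∀ u v : X, ‖u‖ ≤ 4 * ρ → ‖v‖ ≤ 4 * ρ → ‖R u - R v‖ ≤ L * ‖u - v‖) →
      ∀ u v : X, ‖Rρ ρ u - Rρ ρ v‖ ≤ (1 + 8 * (1 + 2 * ‖P‖)) * L * ‖u - v‖) ∧
    (∀ ε : ℝ, 0 < ε → ∃ ρ₀ : ℝ, 0 < ρ₀ ∧ ∀ ρ : ℝ, 0 < ρ → ρ ≤ ρ₀ →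
      ∀ u v : X, ‖Rρ ρ u - Rρ ρ v‖ ≤ ε * ‖u - v‖) := by
  have hχ : ∀ y, |χ y| ≤ 1 := fun y => abs_le.2 ⟨by linarith [(hχ01 y).1], (hχ01 y).2⟩
  have hRρ_eq : ∀ ρ u, Rρ ρ u = cutoff χ P ρ u • R u := hRρ
  have lipschitz : ∀ ρ : ℝ, 0 < ρ → ∀ L : ℝ,
      (∀ u v : X, ‖u‖ ≤ 4 * ρ → ‖v‖ ≤ 4 * ρ → ‖R u - R v‖ ≤ L * ‖u - v‖) →
      ∀ u v : X, ‖Rρ ρ u - Rρ ρ v‖ ≤ (1 + 8 * (1 + 2 * ‖P‖)) * L * ‖u - v‖ := by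
    intro ρ hρ L hL u v
    have h := norm_smul_sub_smul_le (ξ := cutoff χ P ρ) (abs_cutoff_le_one hχ) (abs_cutoff_sub_le hχ hχlip hρ)
      (fun _ => norm_le_of_cutoff_ne_zero hχ0 hρ) hR0 hL (by positivity) u v
    rw [hRρ_eq, hRρ_eq]
    convert h using 3
    field_simp
    ring
  refine ⟨fun ρ hρ u hu => by rw [hRρ_eq, cutoff_eq_zero_of_le_norm hχ0 hρ hu, zero_smul],
    lipschitz, fun ε hε => ?_⟩
  have hc : 0 < 1 + 8 * (1 + 2 * ‖P‖) := by positivity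
  obtain ⟨δ, hδ, hRδ⟩ := ((hR.hasStrictFDerivAt one_ne_zero).congr_fderiv hDR0
    ).exists_norm_sub_le_on_closedBall (div_pos hε hc)
  refine ⟨δ / 4, by positivity, fun ρ hρ hρδ u v => ?_⟩
  calc ‖Rρ ρ u - Rρ ρ v‖ ≤ (1 + 8 * (1 + 2 * ‖P‖)) * (ε / (1 + 8 * (1 + 2 * ‖P‖))) * ‖u - v‖ :=
        lipschitz ρ hρ _ (fun x y hx hy => hRδ x (mem_closedBall_zero_iff.2 (by linarith))
          y (mem_closedBall_zero_iff.2 (by linarith))) u v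
    _ = ε * ‖u - v‖ := by rw [mul_div_cancel₀ _ hc.ne']

/-- Lemma 6.1 of the paper: properties of the cut-off nonlinearity `R_ρ`. -/
theorem cutoff_nonlinearity {X Y : Type*} [NormedAddCommGroup X] [NormedSpace ℝ X]
    [NormedAddCommGroup Y] [NormedSpace ℝ Y]
    (P : X →L[ℝ] X) (hPproj : ∀ x : X, P (P x) = P x)
    (χ : ℝ → ℝ)
    (hχ1 : ∀ y : ℝ, y ≤ 1 → χ y = 1)
    (hχ01 : ∀ y : ℝ, 0 ≤ χ y ∧ χ y ≤ 1)
    (hχ0 : ∀ y : ℝ, 2 ≤ y → χ y = 0)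
    (hχlip : ∀ y₁ y₂ : ℝ, |χ y₁ - χ y₂| ≤ 2 * |y₁ - y₂|)
    (R : X → Y) (hR : ContDiff ℝ 1 R) (hR0 : R 0 = 0)
    (hDR0 : fderiv ℝ R 0 = 0)
    (Rρ : ℝ → X → Y)
    (hRρ : ∀ ρ : ℝ, ∀ u : X,
      Rρ ρ u = (χ (‖P u‖ / ρ) * χ (‖u - P u‖ / ρ)) • R u) :
    (∀ ρ : ℝ, 0 < ρ → ∀ u : X, 4 * ρ ≤ ‖u‖ → Rρ ρ u = 0) ∧
    (∀ ρ : ℝ, 0 < ρ → ∀ L : ℝ,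
      (∀ u v : X, ‖u‖ ≤ 4 * ρ → ‖v‖ ≤ 4 * ρ → ‖R u - R v‖ ≤ L * ‖u - v‖) →
      ∀ u v : X, ‖Rρ ρ u - Rρ ρ v‖ ≤ (1 + 8 * (1 + 2 * ‖P‖)) * L * ‖u - v‖) ∧
    (∀ ε : ℝ, 0 < ε → ∃ ρ₀ : ℝ, 0 < ρ₀ ∧ ∀ ρ : ℝ, 0 < ρ → ρ ≤ ρ₀ →
      ∀ u v : X, ‖Rρ ρ u - Rρ ρ v‖ ≤ ε * ‖u - v‖) :=
  cutoff_nonlinearity_general P χ hχ01 hχ0 hχlip R hR hR0 hDR0 Rρ hRρ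
end

section
/- Let h > 0, C > 0, C₀ > 0, C₁ > 0 and c > 0 be real numbers, and let S ⊆ ℂ be a set such that: (a) every λ ∈ S with |λ| > C satisfies C₀·e^{−h·Re λ} ≤ |λ| ≤ C₁·e^{−h·Re λ}; and (b) for every r ≥ 0 the set S_r := {z ∈ S : |z| ≤ r} is finite, and (card S_r)/r → c as r → ∞. Then there exists m ∈ ℝ such that there is no real number α with the following properties: α = Re λ for some λ ∈ S, α < m, 2α < 0, and sup{Re μ : μ ∈ S, Re μ < α} < 2α. In other words, the spectral gap condition β < 2α < 0 (with β the supremum of real parts of elements of S strictly below α) can hold only for α bounded below. -/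
/-!
For `α` very negative put `t = exp (-h α)`. Every root of modulus in `(C₁ t, C₀ t²]` has real
part in `[2α, α)`, by the strip bounds. The counting asymptotics force roots in every
annulus `(r, r']` with `r` large and `r' > 3r`, and `C₀ t² > 3 C₁ t` once `t` is large; hence
for such `α` the supremum of the real parts below `α` is at least `2α`.
-/

open Filter Topology Real

theorem Filter.Tendsto.eventually_lt_of_three_mul_lt {f : ℝ → ℝ} {c : ℝ} (hc : 0 < c)
    (hf : Tendsto (fun r => f r / r) atTop (𝓝 c)) :
    ∀ᶠ r in atTop, ∀ r', 3 * r < r' → f r < f r' := by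
  have hratio : ∀ᶠ r in atTop, ∀ r', r ≤ r' →
      0 < r' ∧ c / 2 < f r' / r' ∧ f r' / r' < 3 * c / 2 :=
    Filter.eventually_forall_ge_atTop.2 <|
      (eventually_gt_atTop 0).and (hf.eventually (Ioo_mem_nhds (by linarith) (by linarith)))
  filter_upwards [hratio] with r hr r' hrr'
  obtain ⟨hr0, -, hr_upper⟩ := hr r le_rfl
  obtain ⟨-, hr'_lower, -⟩ := hr r' (by linarith)
  rw [div_lt_iff₀ hr0] at hr_upper
  rw [lt_div_iff₀ (by linarith)] at hr'_lower
  nlinarith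

theorem eventually_exists_norm_mem_Ioc {E : Type*} [Norm E] {S : Set E} {c : ℝ} (hc : 0 < c)
    (hcount : Tendsto (fun r : ℝ => ({z ∈ S | ‖z‖ ≤ r}.ncard : ℝ) / r) atTop (𝓝 c)) :
    ∀ᶠ r in atTop, ∀ r', 3 * r < r' → ∃ z ∈ S, r < ‖z‖ ∧ ‖z‖ ≤ r' := by
  filter_upwards [hcount.eventually_lt_of_three_mul_lt hc,
    hcount.eventually (eventually_gt_nhds hc), eventually_gt_atTop 0] with r hgrow hpos hr r' hrr'
  have hfinite : {z ∈ S | ‖z‖ ≤ r}.Finite :=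
    Set.finite_of_ncard_pos (by exact_mod_cast (div_pos_iff_of_pos_right hr).1 hpos)
  obtain ⟨z, ⟨hzS, hzr'⟩, hzr⟩ :=
    Set.exists_mem_notMem_of_ncard_lt_ncard (by exact_mod_cast hgrow r' hrr') hfinite
  exact ⟨z, hzS, lt_of_not_ge fun h => hzr ⟨hzS, h⟩, hzr'⟩

theorem strictAnti_mul_exp_neg_mul {a h : ℝ} (ha : 0 < a) (hh : 0 < h) :
    StrictAnti fun x : ℝ => a * exp (-h * x) :=
  fun _ _ hxy => mul_lt_mul_of_pos_left (exp_lt_exp.2 (by nlinarith)) ha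

theorem tendsto_exp_neg_mul_atBot {h : ℝ} (hh : 0 < h) :
    Tendsto (fun x : ℝ => exp (-h * x)) atBot atTop :=
  tendsto_exp_atTop.comp (tendsto_id.const_mul_atBot_of_neg (by linarith))

theorem eventually_mul_exp_neg_lt_mul_exp_neg_two_mul {a h : ℝ} (ha : 0 < a) (hh : 0 < h)
    (b : ℝ) : ∀ᶠ x in atBot, b * exp (-h * x) < a * exp (-h * (2 * x)) := by
  filter_upwards [((tendsto_exp_neg_mul_atBot hh).const_mul_atTop ha).eventually_gt_atTop b]
    with x hx
  calc b * exp (-h * x) < a * exp (-h * x) * exp (-h * x) :=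
        mul_lt_mul_of_pos_right hx (exp_pos _)
    _ = a * exp (-h * (2 * x)) := by rw [mul_assoc, ← exp_add]; ring_nf

theorem spectral_gap_fails_general (h C C₀ C₁ c : ℝ) (hh : 0 < h)
    (hC₀ : 0 < C₀) (hC₁ : 0 < C₁) (hc : 0 < c)
    (S : Set ℂ)
    (hstrip : ∀ l ∈ S, C < ‖l‖ →
      C₀ * Real.exp (-h * l.re) ≤ ‖l‖ ∧
      ‖l‖ ≤ C₁ * Real.exp (-h * l.re))
    (hcount : Filter.Tendsto
      (fun r : ℝ => ({z ∈ S | ‖z‖ ≤ r}.ncard : ℝ) / r)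
      Filter.atTop (nhds c)) :
    ∃ m : ℝ, ¬ ∃ α : ℝ, (∃ l ∈ S, l.re = α) ∧ α < m ∧ 2 * α < 0 ∧
      sSup (Complex.re '' {μ ∈ S | μ.re < α}) < 2 * α := by
  have hr : Tendsto (fun α : ℝ => C₁ * exp (-h * α)) atBot atTop :=
    (tendsto_exp_neg_mul_atBot hh).const_mul_atTop hC₁
  obtain ⟨m, hm⟩ := eventually_atBot.1 <|
    (hr.eventually (eventually_exists_norm_mem_Ioc hc hcount)).and <|
      (hr.eventually_gt_atTop C).and
        (eventually_mul_exp_neg_lt_mul_exp_neg_two_mul hC₀ hh (3 * C₁))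
  refine ⟨m, fun ⟨α, _, hαm, _, hgap⟩ => ?_⟩
  obtain ⟨hannulus, hCα, hgap_width⟩ := hm α hαm.le
  obtain ⟨μ, hμS, hμ_lower, hμ_upper⟩ :=
    hannulus (C₀ * exp (-h * (2 * α))) (by linarith)
  obtain ⟨hstrip_lower, hstrip_upper⟩ := hstrip μ hμS (hCα.trans hμ_lower)
  have hμα : μ.re < α :=
    (strictAnti_mul_exp_neg_mul hC₁ hh).lt_iff_gt.1 (hμ_lower.trans_le hstrip_upper)
  have hαμ : 2 * α ≤ μ.re :=
    (strictAnti_mul_exp_neg_mul hC₀ hh).le_iff_ge.1 (hstrip_lower.trans hμ_upper)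
  have hμ_sup : μ.re ≤ sSup (Complex.re '' {μ ∈ S | μ.re < α}) :=
    le_csSup ⟨α, by rintro _ ⟨ν, ⟨-, hν⟩, rfl⟩; exact hν.le⟩
      ⟨μ, ⟨hμS, hμα⟩, rfl⟩
  linarith

/-- The lemma of Section 3.1.2 of the paper: under the strip confinement and
root-counting asymptotics for the characteristic roots, the spectral gap condition
`β < 2α < 0` can hold only for `α` bounded below. -/
theorem spectral_gap_fails (h C C₀ C₁ c : ℝ) (hh : 0 < h) (hC : 0 < C)
    (hC₀ : 0 < C₀) (hC₁ : 0 < C₁) (hc : 0 < c)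
    (S : Set ℂ)
    (hstrip : ∀ l ∈ S, C < ‖l‖ →
      C₀ * Real.exp (-h * l.re) ≤ ‖l‖ ∧
      ‖l‖ ≤ C₁ * Real.exp (-h * l.re))
    (hfin : ∀ r : ℝ, 0 ≤ r → {z ∈ S | ‖z‖ ≤ r}.Finite)
    (hcount : Filter.Tendsto
      (fun r : ℝ => ({z ∈ S | ‖z‖ ≤ r}.ncard : ℝ) / r)
      Filter.atTop (nhds c)) :
    ∃ m : ℝ, ¬ ∃ α : ℝ, (∃ l ∈ S, l.re = α) ∧ α < m ∧ 2 * α < 0 ∧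
      sSup (Complex.re '' {μ ∈ S | μ.re < α}) < 2 * α :=
  spectral_gap_fails_general h C C₀ C₁ c hh hC₀ hC₁ hc S hstrip hcount
end

section
/- Let n ≥ 1 be an integer and T₁, …, T_n nonnegative real numbers. Define Q := Σ_{j=1}^{n} (j/n)·T_j^{n/j}·(2(n−j))^{(n−j)/j}, with the convention 0⁰ = 1 (so the j = n summand equals T_n). Then for every real number a ≥ 0: Σ_{j=1}^{n} T_j·a^j ≤ 1/2 + Q·a^n. -/
/-!
Each summand is bounded separately by the weighted AM–GM inequality with weights `j/n` and
`(n-j)/n`: writing `c = 2(n-j)`, the product `T_j a^j` is the weighted geometric mean of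
`T_j^{n/j} c^{(n-j)/j} a^n` and `c⁻¹`, so it is at most `(j/n) T_j^{n/j} c^{(n-j)/j} a^n + 1/(2n)`.
Summing over `j` gives `Q a^n` plus at most `n · 1/(2n) = 1/2`. For `j = n` the second weight
vanishes and `0⁰ = 1` makes the same computation work with `c = 0`.
-/

open Finset Real

theorem mul_rpow_le_young {t a c r s : ℝ} (ht : 0 ≤ t) (ha : 0 ≤ a) (hc : 0 ≤ c)
    (hc₀ : c = 0 → r = s) (hr : 0 < r) (hrs : r ≤ s) :
    t * a ^ r ≤ r / s * (t ^ (s / r) * c ^ ((s - r) / r) * a ^ s) + (s - r) / s * c⁻¹ := by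
  have hs : 0 < s := hr.trans_le hrs
  have hce : c ^ ((s - r) / s) ≠ 0 := by
    rw [Ne, rpow_eq_zero_iff_of_nonneg hc, not_and_or, not_not]
    rcases eq_or_ne c 0 with h | h
    · exact .inr (by rw [hc₀ h, sub_self, zero_div])
    · exact .inl h
  have hgeom : (t ^ (s / r) * c ^ ((s - r) / r) * a ^ s) ^ (r / s) * c⁻¹ ^ ((s - r) / s)
      = t * a ^ r := by
    have e₁ : s / r * (r / s) = 1 := by field_simp
    have e₂ : (s - r) / r * (r / s) = (s - r) / s := by field_simp
    have e₃ : s * (r / s) = r := by field_simp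
    rw [mul_rpow (by positivity) (by positivity), mul_rpow (by positivity) (by positivity),
      ← rpow_mul ht, ← rpow_mul hc, ← rpow_mul ha, inv_rpow hc, e₁, e₂, e₃, rpow_one]
    field_simp
  calc t * a ^ r = _ := hgeom.symm
    _ ≤ _ := geom_mean_le_arith_mean2_weighted (by positivity)
        (div_nonneg (sub_nonneg.2 hrs) hs.le) (by positivity) (by positivity)
        (by field_simp; ring)

theorem mul_rpow_le_scaled_young {t a r s : ℝ} (κ : ℝ) (hκ : 0 < κ) (ht : 0 ≤ t) (ha : 0 ≤ a)
    (hr : 0 < r) (hrs : r ≤ s) :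
    t * a ^ r ≤ r / s * t ^ (s / r) * (κ * (s - r)) ^ ((s - r) / r) * a ^ s + 1 / (κ * s) := by
  have hs : 0 < s := hr.trans_le hrs
  have hc₀ : κ * (s - r) = 0 → r = s := fun h ↦
    (sub_eq_zero.1 ((mul_eq_zero.1 h).resolve_left hκ.ne')).symm
  have hslack : (s - r) / s * (κ * (s - r))⁻¹ ≤ 1 / (κ * s) := by
    rcases hrs.eq_or_lt with rfl | hlt
    · simp only [sub_self, zero_div, zero_mul]; positivity
    · have : s - r ≠ 0 := (sub_pos.2 hlt).ne'
      exact le_of_eq (by field_simp)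
  calc t * a ^ r ≤ r / s * (t ^ (s / r) * (κ * (s - r)) ^ ((s - r) / r) * a ^ s)
        + (s - r) / s * (κ * (s - r))⁻¹ :=
        mul_rpow_le_young ht ha (mul_nonneg hκ.le (sub_nonneg.2 hrs)) hc₀ hr hrs
    _ ≤ _ := by rw [mul_assoc (r / s), mul_assoc (r / s)]; gcongr

open Finset in
theorem young_sum_bound_general (n : ℕ) (T : ℕ → ℝ) (hT : ∀ j, 0 ≤ T j)
    (Q : ℝ)
    (hQ : Q = ∑ j ∈ Finset.Icc 1 n, ((j : ℝ) / (n : ℝ)) *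
      (T j) ^ ((n : ℝ) / (j : ℝ)) *
      (2 * ((n : ℝ) - (j : ℝ))) ^ (((n : ℝ) - (j : ℝ)) / (j : ℝ))) :
    ∀ a : ℝ, 0 ≤ a →
      (∑ j ∈ Finset.Icc 1 n, T j * a ^ j) ≤ 1 / 2 + Q * a ^ n := by
  intro a ha
  have hterm : ∀ j ∈ Icc 1 n, T j * a ^ j ≤ (j : ℝ) / n * T j ^ ((n : ℝ) / j) *
      (2 * ((n : ℝ) - j)) ^ (((n : ℝ) - j) / j) * a ^ n + 1 / (2 * n) := by
    intro j hj
    obtain ⟨hj₁, hjn⟩ := mem_Icc.1 hj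
    simpa only [rpow_natCast] using mul_rpow_le_scaled_young 2 two_pos (hT j) ha
      (r := j) (s := n) (by exact_mod_cast hj₁) (by exact_mod_cast hjn)
  have hslack : (n : ℝ) * (1 / (2 * n)) ≤ 1 / 2 := by
    rw [mul_one_div, div_mul_eq_div_div_swap]
    exact div_le_div_of_nonneg_right (div_self_le_one _) zero_le_two
  calc ∑ j ∈ Icc 1 n, T j * a ^ j
      ≤ Q * a ^ n + n * (1 / (2 * n)) := by
        refine (sum_le_sum hterm).trans_eq ?_
        rw [sum_add_distrib, sum_const, Nat.card_Icc, add_tsub_cancel_right, nsmul_eq_mul,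
          ← sum_mul, hQ]
    _ ≤ 1 / 2 + Q * a ^ n := by linarith

open Finset in
/-- The Young-inequality bound from the proof of Corollary 4.8 of the paper:
`Σ_{j=1}^{n} T_j a^j ≤ 1/2 + Q a^n` with
`Q = Σ_{j=1}^{n} (j/n) T_j^{n/j} (2(n−j))^{(n−j)/j}` (convention `0⁰ = 1`). -/
theorem young_sum_bound (n : ℕ) (hn : 1 ≤ n) (T : ℕ → ℝ) (hT : ∀ j, 0 ≤ T j)
    (Q : ℝ)
    (hQ : Q = ∑ j ∈ Finset.Icc 1 n, ((j : ℝ) / (n : ℝ)) *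
      (T j) ^ ((n : ℝ) / (j : ℝ)) *
      (2 * ((n : ℝ) - (j : ℝ))) ^ (((n : ℝ) - (j : ℝ)) / (j : ℝ))) :
    ∀ a : ℝ, 0 ≤ a →
      (∑ j ∈ Finset.Icc 1 n, T j * a ^ j) ≤ 1 / 2 + Q * a ^ n :=
  young_sum_bound_general n T hT Q hQ
end

section
/- Let n ≥ 1 be an integer, h > 0, and T₁, …, T_n nonnegative real numbers; define Q := Σ_{j=1}^{n} (j/n)·T_j^{n/j}·(2(n−j))^{(n−j)/j}, with the convention 0⁰ = 1 (so the j = n summand equals T_n). Let a₁, …, a_n : ℂ → ℂ satisfy |a_j(z)| ≤ T_j·e^{−j·h·Re z} for every z ∈ ℂ with Re z < 0 and every j ∈ {1,…,n}, and define D : ℂ → ℂ by D(z) := z^n − Σ_{j=1}^{n} z^{n−j}·a_j(z). Then for every z ∈ ℂ with Re z < 0: |D(z)| ≥ |z|^n/2 − Q·e^{−n·h·Re z}. -/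
/-!
By the reverse triangle inequality it suffices to bound `∑ⱼ |z|^(n-j) |aⱼ(z)|` by
`|z|^n / 2 + Q e^(-nh Re z)`. Writing `|aⱼ(z)| ≤ Tⱼ e^(-jh Re z)`, each summand is split by
Young's inequality with the conjugate exponents `n / (n - j)` and `n / j`, weighted so that its
`|z|^n` part is `|z|^n / (2n)`; the `n` such parts add up to `|z|^n / 2`, and the remaining parts
are exactly the summands of `Q` times `e^(-nh Re z)`.
-/

open Real Finset

lemma pow_sub_mul_le_young {n j : ℕ} (hj : 1 ≤ j) (hjn : j ≤ n) {x s : ℝ} (hx : 0 ≤ x)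
    (hs : 0 ≤ s) :
    x ^ (n - j) * s ≤ x ^ n / (2 * n) +
      (j / n) * s ^ ((n : ℝ) / j) * (2 * ((n : ℝ) - j)) ^ (((n : ℝ) - j) / j) := by
  have hj₀ : (0 : ℝ) < j := by exact_mod_cast hj
  have hn₀ : (0 : ℝ) < n := by exact_mod_cast hj.trans hjn
  rcases hjn.eq_or_lt with rfl | hlt
  · simp only [tsub_self, pow_zero, one_mul, div_self hj₀.ne', rpow_one, sub_self, mul_zero,
      zero_div, rpow_zero, mul_one, le_add_iff_nonneg_left]
    positivity
  have hm₀ : (0 : ℝ) < n - j := sub_pos.2 (by exact_mod_cast hlt)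
  have hpq : (n / (n - j) : ℝ).HolderConjugate (n / j) := by
    have := HolderConjugate.inv_inv (a := (n - j) / n) (b := j / n) (by positivity)
      (by positivity) (by field_simp; ring)
    rwa [inv_div, inv_div] at this
  -- Young's inequality for `(x ^ (n - j) / lam) * (lam * s)`; the weight `lam` is chosen
  -- so that `lam ^ (n / (n - j)) = 2 (n - j)`.
  set lam : ℝ := (2 * ((n : ℝ) - j)) ^ (((n : ℝ) - j) / n)
  have hlam : 0 < lam := by positivity
  have hlam_p : lam ^ ((n : ℝ) / (n - j)) = 2 * (n - j) := by
    rw [← rpow_mul (by positivity), div_mul_div_cancel₀ hn₀.ne', div_self hm₀.ne', rpow_one]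
  have hlam_q : lam ^ ((n : ℝ) / j) = (2 * ((n : ℝ) - j)) ^ (((n : ℝ) - j) / j) := by
    rw [← rpow_mul (by positivity), div_mul_div_cancel₀ hn₀.ne']
  have hx_p : (x ^ (n - j)) ^ ((n : ℝ) / (n - j)) = x ^ n := by
    rw [← rpow_natCast, ← rpow_mul hx, Nat.cast_sub hjn, mul_div_cancel₀ _ hm₀.ne', rpow_natCast]
  have hyoung := young_inequality_of_nonneg (div_nonneg (pow_nonneg hx (n - j)) hlam.le)
    (mul_nonneg hlam.le hs) hpq
  rw [← mul_assoc, div_mul_cancel₀ _ hlam.ne', div_rpow (pow_nonneg hx _) hlam.le,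
    mul_rpow hlam.le hs, hx_p, hlam_p, hlam_q] at hyoung
  refine hyoung.trans_eq ?_
  field_simp

lemma pow_sub_mul_exp_le_young {n j : ℕ} (hj : 1 ≤ j) (hjn : j ≤ n) {x t : ℝ} (hx : 0 ≤ x)
    (ht : 0 ≤ t) (c : ℝ) :
    x ^ (n - j) * (t * exp (j * c)) ≤ x ^ n / (2 * n) +
      (j / n) * t ^ ((n : ℝ) / j) * (2 * ((n : ℝ) - j)) ^ (((n : ℝ) - j) / j) *
        exp (n * c) := by
  have hexp : exp (j * c) ^ ((n : ℝ) / j) = exp (n * c) := by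
    rw [← exp_mul]
    field_simp
  refine (pow_sub_mul_le_young hj hjn hx (mul_nonneg ht (exp_pos _).le)).trans_eq ?_
  rw [mul_rpow ht (exp_pos _).le, hexp]
  ring

lemma sum_pow_sub_mul_exp_le_young (n : ℕ) {x : ℝ} (hx : 0 ≤ x) {T : ℕ → ℝ}
    (hT : ∀ j, 0 ≤ T j) (c : ℝ) :
    ∑ j ∈ Icc 1 n, x ^ (n - j) * (T j * exp (j * c)) ≤ x ^ n / 2 +
      (∑ j ∈ Icc 1 n, (j / n) * T j ^ ((n : ℝ) / j) *
        (2 * ((n : ℝ) - j)) ^ (((n : ℝ) - j) / j)) * exp (n * c) := by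
  -- an inequality rather than an equation, because of the junk value `x ^ 0 / 0 = 0` at `n = 0`
  have hhalf : n * (x ^ n / (2 * n)) ≤ x ^ n / 2 := by
    rcases n.eq_zero_or_pos with rfl | hn
    · simp only [CharP.cast_eq_zero, zero_mul]
      positivity
    · exact le_of_eq (by field_simp)
  calc ∑ j ∈ Icc 1 n, x ^ (n - j) * (T j * exp (j * c))
      ≤ ∑ j ∈ Icc 1 n, (x ^ n / (2 * n) + (j / n) * T j ^ ((n : ℝ) / j) *
          (2 * ((n : ℝ) - j)) ^ (((n : ℝ) - j) / j) * exp (n * c)) :=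
        sum_le_sum fun j hj ↦
          pow_sub_mul_exp_le_young (mem_Icc.1 hj).1 (mem_Icc.1 hj).2 hx (hT j) c
    _ ≤ _ := by
        rw [sum_add_distrib, sum_const, Nat.card_Icc, add_tsub_cancel_right, nsmul_eq_mul,
          sum_mul]
        gcongr

theorem characteristic_lower_bound_general (n : ℕ) (h : ℝ)
    (T : ℕ → ℝ) (hT : ∀ j, 0 ≤ T j)
    (Q : ℝ)
    (hQ : Q = ∑ j ∈ Finset.Icc 1 n, ((j : ℝ) / (n : ℝ)) *
      (T j) ^ ((n : ℝ) / (j : ℝ)) *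
      (2 * ((n : ℝ) - (j : ℝ))) ^ (((n : ℝ) - (j : ℝ)) / (j : ℝ)))
    (a : ℕ → ℂ → ℂ)
    (ha : ∀ j ∈ Finset.Icc 1 n, ∀ z : ℂ, z.re < 0 →
      ‖a j z‖ ≤ T j * Real.exp (-(j : ℝ) * h * z.re))
    (D : ℂ → ℂ)
    (hD : ∀ z : ℂ, D z = z ^ n - ∑ j ∈ Finset.Icc 1 n, z ^ (n - j) * a j z) :
    ∀ z : ℂ, z.re < 0 →
      ‖z‖ ^ n / 2 - Q * Real.exp (-(n : ℝ) * h * z.re) ≤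
        ‖D z‖ := by
  intro z hz
  have hexp (k : ℝ) : -k * h * z.re = k * (-h * z.re) := by ring
  have hsum : ‖∑ j ∈ Icc 1 n, z ^ (n - j) * a j z‖ ≤
      ∑ j ∈ Icc 1 n, ‖z‖ ^ (n - j) * (T j * exp (j * (-h * z.re))) := by
    refine (norm_sum_le _ _).trans (sum_le_sum fun j hj ↦ ?_)
    rw [norm_mul, norm_pow, ← hexp]
    gcongr
    exact ha j hj z hz
  have hyoung := sum_pow_sub_mul_exp_le_young n (norm_nonneg z) hT (-h * z.re)
  have htriangle := norm_sub_norm_le (z ^ n) (∑ j ∈ Icc 1 n, z ^ (n - j) * a j z)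
  rw [norm_pow] at htriangle
  rw [hD z, hQ, hexp]
  linarith

/-- The lower bound on the characteristic function established in the proof of
Corollary 4.8 of the paper: `|D(z)| ≥ |z|^n/2 − Q e^{−nh Re z}` for `Re z < 0`. -/
theorem characteristic_lower_bound (n : ℕ) (hn : 1 ≤ n) (h : ℝ) (hh : 0 < h)
    (T : ℕ → ℝ) (hT : ∀ j, 0 ≤ T j)
    (Q : ℝ)
    (hQ : Q = ∑ j ∈ Finset.Icc 1 n, ((j : ℝ) / (n : ℝ)) *
      (T j) ^ ((n : ℝ) / (j : ℝ)) *
      (2 * ((n : ℝ) - (j : ℝ))) ^ (((n : ℝ) - (j : ℝ)) / (j : ℝ)))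
    (a : ℕ → ℂ → ℂ)
    (ha : ∀ j ∈ Finset.Icc 1 n, ∀ z : ℂ, z.re < 0 →
      ‖a j z‖ ≤ T j * Real.exp (-(j : ℝ) * h * z.re))
    (D : ℂ → ℂ)
    (hD : ∀ z : ℂ, D z = z ^ n - ∑ j ∈ Finset.Icc 1 n, z ^ (n - j) * a j z) :
    ∀ z : ℂ, z.re < 0 →
      ‖z‖ ^ n / 2 - Q * Real.exp (-(n : ℝ) * h * z.re) ≤
        ‖D z‖ :=
  characteristic_lower_bound_general n h T hT Q hQ a ha D hD
end

section
/- Let n ≥ 1 be an integer, h > 0, and T₁, …, T_n nonnegative real numbers; define Q := Σ_{j=1}^{n} (j/n)·T_j^{n/j}·(2(n−j))^{(n−j)/j}, with the convention 0⁰ = 1 (so the j = n summand equals T_n), and assume Q > 0. Let a₁, …, a_n : ℂ → ℂ satisfy |a_j(z)| ≤ T_j·e^{−j·h·Re z} for every z ∈ ℂ with Re z < 0 and every j, and define D(z) := z^n − Σ_{j=1}^{n} z^{n−j}·a_j(z). If z ∈ ℂ satisfies Re z < 0 and h·(−Re z) < log(|z|) − (1/n)·log(2Q), then D(z) ≠ 0.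 -/
/-!
If `D(z) = 0` then `z^n = ∑ z^{n-j} a_j(z)`, and the hypothesis on `h` says `e^{-h Re z} < x|z|`
with `x = (2Q)^{-1/n}`; dividing by `|z|^n` gives `1 ≤ ∑ T_j x^j`. Young's inequality with
exponents `n/j` and `n/(n-j)`, the second factor scaled by `2(n-j)`, gives
`T_j x^j ≤ q_j x^n + 1/(2n)` for `j < n`, where `q_j` is the `j`-th summand of `Q`. Summing,
`∑ T_j x^j ≤ Q x^n + (n-1)/(2n) = 1/2 + (n-1)/(2n) < 1`.
-/

open Finset

theorem mul_pow_le_young {n j : ℕ} (hj : 0 < j) (hjn : j < n) {t x c : ℝ}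
    (ht : 0 ≤ t) (hx : 0 ≤ x) (hc : 0 < c) :
    t * x ^ j ≤ (j / n) * t ^ ((n : ℝ) / j) * c ^ (((n : ℝ) - j) / j) * x ^ n
      + (n - j) / (n * c) := by
  have hj' : (0 : ℝ) < j := by exact_mod_cast hj
  have hjn' : (j : ℝ) < n := by exact_mod_cast hjn
  have hn' : (0 : ℝ) < n := hj'.trans hjn'
  have amgm := Real.geom_mean_le_arith_mean2_weighted (w₁ := j / n) (w₂ := (n - j) / n)
    (p₁ := t ^ ((n : ℝ) / j) * c ^ (((n : ℝ) - j) / j) * x ^ n) (p₂ := c⁻¹)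
    (by positivity) (div_nonneg (by linarith) hn'.le) (by positivity) (by positivity)
    (by field_simp; ring)
  have hprod : (t ^ ((n : ℝ) / j) * c ^ (((n : ℝ) - j) / j) * x ^ n) ^ ((j : ℝ) / n)
      * c⁻¹ ^ (((n : ℝ) - j) / n) = t * x ^ j := by
    rw [Real.mul_rpow (by positivity) (by positivity),
      Real.mul_rpow (by positivity) (by positivity), ← Real.rpow_mul ht, ← Real.rpow_mul hc.le,
      ← Real.rpow_natCast x n, ← Real.rpow_mul hx, Real.inv_rpow hc.le]
    have e1 : (n : ℝ) / j * (j / n) = 1 := by field_simp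
    have e2 : ((n : ℝ) - j) / j * (j / n) = (n - j) / n := by field_simp
    have e3 : (n : ℝ) * (j / n) = j := by field_simp
    rw [e1, e2, e3, Real.rpow_one, Real.rpow_natCast]
    field_simp [(Real.rpow_pos_of_pos hc (((n : ℝ) - j) / n)).ne']
  rw [hprod] at amgm
  calc t * x ^ j ≤ _ := amgm
    _ = _ := by field_simp

/-- The `j`-th summand of the constant `Q`; at `j = n` the factor `0 ^ 0` is `1`. -/
noncomputable def youngCoeff (n j : ℕ) (t : ℝ) : ℝ :=
  (j / n) * t ^ ((n : ℝ) / j) * (2 * ((n : ℝ) - j)) ^ (((n : ℝ) - j) / j)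

theorem mul_pow_le_youngCoeff {n j : ℕ} (hj : 0 < j) (hjn : j < n) {t x : ℝ}
    (ht : 0 ≤ t) (hx : 0 ≤ x) :
    t * x ^ j ≤ youngCoeff n j t * x ^ n + 1 / (2 * n) := by
  have hjn' : (j : ℝ) < n := by exact_mod_cast hjn
  have hnj : (n : ℝ) - j ≠ 0 := by linarith
  calc t * x ^ j ≤ _ := mul_pow_le_young hj hjn ht hx (c := 2 * (n - j)) (by linarith)
    _ = _ := by unfold youngCoeff; field_simp

theorem youngCoeff_self {n : ℕ} (hn : n ≠ 0) (t : ℝ) : youngCoeff n n t = t := by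
  simp [youngCoeff, hn]

theorem sum_mul_pow_le_youngCoeff {n : ℕ} (hn : 1 ≤ n) {t : ℕ → ℝ} (ht : ∀ j, 0 ≤ t j)
    {x : ℝ} (hx : 0 ≤ x) :
    ∑ j ∈ Icc 1 n, t j * x ^ j ≤
      (∑ j ∈ Icc 1 n, youngCoeff n j (t j)) * x ^ n + (n - 1) / (2 * n) := by
  obtain ⟨m, rfl⟩ := Nat.exists_eq_add_of_le' hn
  rw [sum_Icc_succ_top hn, sum_Icc_succ_top hn, youngCoeff_self m.succ_ne_zero]
  have hterms : ∑ j ∈ Icc 1 m, t j * x ^ j ≤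
      ∑ j ∈ Icc 1 m, (youngCoeff (m + 1) j (t j) * x ^ (m + 1) + 1 / (2 * (m + 1 : ℕ))) :=
    sum_le_sum fun j hj ↦ by
      obtain ⟨hj1, hjm⟩ := mem_Icc.mp hj
      exact mul_pow_le_youngCoeff hj1 (Nat.lt_succ_of_le hjm) (ht j) hx
  rw [sum_add_distrib, ← sum_mul, sum_const, Nat.card_Icc, nsmul_eq_mul] at hterms
  push_cast at hterms ⊢
  have : (m : ℝ) * (1 / (2 * (m + 1))) = (m + 1 - 1) / (2 * (m + 1)) := by ring
  linarith

theorem one_le_sum_of_pow_eq_sum {𝕜 : Type*} [NormedField 𝕜] {n : ℕ} {z : 𝕜} (hz : z ≠ 0)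
    {b : ℕ → 𝕜} {β : ℕ → ℝ} (hroot : z ^ n = ∑ j ∈ Icc 1 n, z ^ (n - j) * b j)
    (hb : ∀ j ∈ Icc 1 n, ‖b j‖ ≤ β j * ‖z‖ ^ j) :
    1 ≤ ∑ j ∈ Icc 1 n, β j := by
  refine le_of_mul_le_mul_right ?_ (pow_pos (norm_pos_iff.mpr hz) n)
  calc 1 * ‖z‖ ^ n = ‖∑ j ∈ Icc 1 n, z ^ (n - j) * b j‖ := by
        rw [one_mul, ← norm_pow, hroot]
    _ ≤ ∑ j ∈ Icc 1 n, ‖z ^ (n - j) * b j‖ := norm_sum_le _ _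
    _ ≤ ∑ j ∈ Icc 1 n, β j * ‖z‖ ^ n := sum_le_sum fun j hj ↦ by
        rw [norm_mul, norm_pow, ← Nat.sub_add_cancel (mem_Icc.mp hj).2, pow_add,
          Nat.sub_add_cancel (mem_Icc.mp hj).2, mul_left_comm]
        exact mul_le_mul_of_nonneg_left (hb j hj) (by positivity)
    _ = (∑ j ∈ Icc 1 n, β j) * ‖z‖ ^ n := (sum_mul _ _ _).symm

theorem characteristic_nonvanishing_general (n : ℕ) (hn : 1 ≤ n) (h : ℝ)
    (T : ℕ → ℝ) (hT : ∀ j, 0 ≤ T j)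
    (Q : ℝ)
    (hQ : Q = ∑ j ∈ Finset.Icc 1 n, ((j : ℝ) / (n : ℝ)) *
      (T j) ^ ((n : ℝ) / (j : ℝ)) *
      (2 * ((n : ℝ) - (j : ℝ))) ^ (((n : ℝ) - (j : ℝ)) / (j : ℝ)))
    (hQpos : 0 < Q)
    (a : ℕ → ℂ → ℂ)
    (ha : ∀ j ∈ Finset.Icc 1 n, ∀ z : ℂ, z.re < 0 →
      ‖a j z‖ ≤ T j * Real.exp (-(j : ℝ) * h * z.re))
    (D : ℂ → ℂ)
    (hD : ∀ z : ℂ, D z = z ^ n - ∑ j ∈ Finset.Icc 1 n, z ^ (n - j) * a j z) :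
    ∀ z : ℂ, z.re < 0 →
      h * (-z.re) < Real.log ‖z‖ - (1 / (n : ℝ)) * Real.log (2 * Q) →
      D z ≠ 0 := by
  intro z hre hlt hDz
  have hn' : (1 : ℝ) ≤ n := by exact_mod_cast hn
  have hz : z ≠ 0 := by rintro rfl; simp at hre
  set x := (2 * Q) ^ (-(1 / n : ℝ))
  have hx : 0 < x := by positivity
  have hQx : Q * x ^ n = 1 / 2 := by
    rw [← Real.rpow_natCast, ← Real.rpow_mul (by positivity), neg_mul, one_div_mul_cancel
      (by positivity), Real.rpow_neg_one]
    field_simp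
  have hE : Real.exp (h * -z.re) < ‖z‖ * x := by
    rw [← Real.lt_log_iff_exp_lt (by positivity), Real.log_mul (norm_ne_zero_iff.mpr hz) hx.ne',
      Real.log_rpow (by positivity)]
    linarith
  have hb : ∀ j ∈ Icc 1 n, ‖a j z‖ ≤ T j * x ^ j * ‖z‖ ^ j := fun j hj ↦
    calc ‖a j z‖ ≤ T j * Real.exp (-(j : ℝ) * h * z.re) := ha j hj z hre
      _ = T j * Real.exp (h * -z.re) ^ j := by rw [← Real.exp_nat_mul]; ring_nf
      _ ≤ T j * (‖z‖ * x) ^ j := by gcongr; exact hT j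
      _ = T j * x ^ j * ‖z‖ ^ j := by ring
  have hone := one_le_sum_of_pow_eq_sum hz (sub_eq_zero.mp ((hD z).symm.trans hDz)) hb
  have hQ' : Q = ∑ j ∈ Icc 1 n, youngCoeff n j (T j) := hQ
  have hsum := sum_mul_pow_le_youngCoeff hn hT hx.le
  rw [← hQ', hQx] at hsum
  have hrem : ((n : ℝ) - 1) / (2 * n) < 1 / 2 := by rw [div_lt_iff₀ (by positivity)]; linarith
  linarith

/-- The non-vanishing criterion of the proof of Corollary 4.8 of the paper:
if `Re z < 0` and `h·(−Re z) < log |z| − (1/n) log (2Q)` then `D(z) ≠ 0`. -/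
theorem characteristic_nonvanishing (n : ℕ) (hn : 1 ≤ n) (h : ℝ) (hh : 0 < h)
    (T : ℕ → ℝ) (hT : ∀ j, 0 ≤ T j)
    (Q : ℝ)
    (hQ : Q = ∑ j ∈ Finset.Icc 1 n, ((j : ℝ) / (n : ℝ)) *
      (T j) ^ ((n : ℝ) / (j : ℝ)) *
      (2 * ((n : ℝ) - (j : ℝ))) ^ (((n : ℝ) - (j : ℝ)) / (j : ℝ)))
    (hQpos : 0 < Q)
    (a : ℕ → ℂ → ℂ)
    (ha : ∀ j ∈ Finset.Icc 1 n, ∀ z : ℂ, z.re < 0 →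
      ‖a j z‖ ≤ T j * Real.exp (-(j : ℝ) * h * z.re))
    (D : ℂ → ℂ)
    (hD : ∀ z : ℂ, D z = z ^ n - ∑ j ∈ Finset.Icc 1 n, z ^ (n - j) * a j z) :
    ∀ z : ℂ, z.re < 0 →
      h * (-z.re) < Real.log ‖z‖ - (1 / (n : ℝ)) * Real.log (2 * Q) →
      D z ≠ 0 :=
  characteristic_nonvanishing_general n hn h T hT Q hQ hQpos a ha D hD
end

section
/- Let X be a real Banach space and let T(t), for t ≥ 0, be bounded linear operators on X with T(0) = id, T(t + s) = T(t)∘T(s) for all t, s ≥ 0, t ↦ T(t)x continuous on [0, ∞) for every x ∈ X, and ‖T(t)‖ ≤ M·e^{ω t} for all t ≥ 0, where M > 0 and ω > 0 are constants. Let G : X → X be Lipschitz with constant ℓ, and fix t̄ > 0 such that ℓ·(M/ω)·(e^{ω t̄} − 1) < 1/2. Suppose x, y : [0, t̄] → X are continuous and satisfy x(t) = T(t)u + ∫₀ᵗ T(t − s)G(x(s)) ds and y(t) = T(t)v + ∫₀ᵗ T(t − s)G(y(s)) ds for all t ∈ [0, t̄], for initial data u, v ∈ X. Then sup_{t ∈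 [0, t̄]} ‖x(t) − y(t)‖ ≤ 2M·e^{ω t̄}·‖u − v‖, and moreover ‖∫₀^{t̄} T(t̄ − s)(G(x(s)) − G(y(s))) ds‖ ≤ (2M²/ω)·(e^{ω t̄} − 1)·e^{ω t̄}·ℓ·‖u − v‖. -/
open Set Filter intervalIntegral

lemma exp_integral_aux (ω t : ℝ) (hω : 0 < ω) :
    ∫ s in (0:ℝ)..t, Real.exp (ω * (t - s)) = (Real.exp (ω * t) - 1) / ω := by
  have h1 : (∫ s in (0:ℝ)..t, Real.exp (ω * (t - s)))
      = ∫ u in (0:ℝ)..t, Real.exp (ω * u) := by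
    have := intervalIntegral.integral_comp_sub_left (a := (0:ℝ)) (b := t)
      (fun u => Real.exp (ω * u)) t
    simpa using this
  rw [h1, intervalIntegral.integral_comp_mul_left (fun u => Real.exp u) (ne_of_gt hω)]
  simp [Real.exp_zero, smul_eq_mul, div_eq_inv_mul]

lemma strong_cont_aux {X : Type*} [NormedAddCommGroup X] [NormedSpace ℝ X]
    (T : ℝ → X →L[ℝ] X) (C : ℝ)
    (hTcont : ∀ x : X, ContinuousOn (fun t => T t x) (Set.Ici (0 : ℝ)))
    (t : ℝ)
    (hbound : ∀ r : ℝ, 0 ≤ r → r ≤ t → ‖T r‖ ≤ C)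
    (w : ℝ → X) (hw : ContinuousOn w (Set.Icc 0 t)) :
    ContinuousOn (fun s => T (t - s) (w s)) (Set.Icc 0 t) := by
  intro s₀ hs₀
  have hts₀ : (0:ℝ) ≤ t - s₀ := by simp [sub_nonneg]; exact hs₀.2
  have hmap : Filter.Tendsto (fun s => t - s) (nhdsWithin s₀ (Set.Icc 0 t))
      (nhdsWithin (t - s₀) (Set.Ici (0:ℝ))) := by
    rw [tendsto_nhdsWithin_iff]
    constructor
    · exact ((continuous_const.sub continuous_id).tendsto s₀).mono_left nhdsWithin_le_nhds
    · filter_upwards [self_mem_nhdsWithin] with s hs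
      simp [sub_nonneg]; exact hs.2
  have h2 : Filter.Tendsto (fun s => T (t - s) (w s₀)) (nhdsWithin s₀ (Set.Icc 0 t))
      (nhds (T (t - s₀) (w s₀))) :=
    (hTcont (w s₀) (t - s₀) hts₀).tendsto.comp hmap
  have hwc : Filter.Tendsto (fun s => ‖w s - w s₀‖) (nhdsWithin s₀ (Set.Icc 0 t)) (nhds 0) := by
    have h := ((hw s₀ hs₀).sub (continuousWithinAt_const (b := w s₀))).norm
    simpa [ContinuousWithinAt, sub_self] using h
  have h1 : Filter.Tendsto (fun s => T (t - s) (w s - w s₀)) (nhdsWithin s₀ (Set.Icc 0 t))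
      (nhds 0) := by
    apply squeeze_zero_norm' (a := fun s => C * ‖w s - w s₀‖)
    · filter_upwards [self_mem_nhdsWithin] with s hs
      calc ‖T (t - s) (w s - w s₀)‖ ≤ ‖T (t - s)‖ * ‖w s - w s₀‖ :=
            (T (t - s)).le_opNorm _
        _ ≤ C * ‖w s - w s₀‖ := by
            apply mul_le_mul_of_nonneg_right _ (norm_nonneg _)
            exact hbound _ (by simp [sub_nonneg]; exact hs.2) (by linarith [hs.1])
    · simpa using hwc.const_mul C
  have := h1.add h2
  rw [zero_add] at this
  apply this.congr
  intro s
  simp [map_sub]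

/-- Lemma 6.3 of the paper (abstract form): under the smallness condition on the
Lipschitz constant of `G`, the mild-solution semiflow is globally Lipschitz with
constant `2M e^{ω t̄}` and its nonlinear part has Lipschitz constant at most
`(2M²/ω)(e^{ω t̄} − 1)e^{ω t̄}·ℓ`. -/
theorem mild_solution_lipschitz {X : Type*} [NormedAddCommGroup X] [NormedSpace ℝ X]
    [CompleteSpace X]
    (T : ℝ → X →L[ℝ] X) (M ω : ℝ) (hM : 0 < M) (hω : 0 < ω)
    (hT0 : T 0 = ContinuousLinearMap.id ℝ X)
    (hTsg : ∀ t : ℝ, 0 ≤ t → ∀ s : ℝ, 0 ≤ s → T (t + s) = (T t).comp (T s))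
    (hTcont : ∀ x : X, ContinuousOn (fun t => T t x) (Set.Ici (0 : ℝ)))
    (hTbound : ∀ t : ℝ, 0 ≤ t → ‖T t‖ ≤ M * Real.exp (ω * t))
    (G : X → X) (ℓ : ℝ) (hℓ : 0 ≤ ℓ)
    (hG : ∀ u v : X, ‖G u - G v‖ ≤ ℓ * ‖u - v‖)
    (tb : ℝ) (htb : 0 < tb)
    (hsmall : ℓ * (M / ω) * (Real.exp (ω * tb) - 1) < 1 / 2)
    (u v : X) (x y : ℝ → X)
    (hx : ContinuousOn x (Set.Icc 0 tb)) (hy : ContinuousOn y (Set.Icc 0 tb))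
    (hxe : ∀ t ∈ Set.Icc (0 : ℝ) tb,
      x t = T t u + ∫ s in (0 : ℝ)..t, T (t - s) (G (x s)))
    (hye : ∀ t ∈ Set.Icc (0 : ℝ) tb,
      y t = T t v + ∫ s in (0 : ℝ)..t, T (t - s) (G (y s))) :
    (∀ t ∈ Set.Icc (0 : ℝ) tb,
      ‖x t - y t‖ ≤ 2 * M * Real.exp (ω * tb) * ‖u - v‖) ∧
    ‖∫ s in (0 : ℝ)..tb, T (tb - s) (G (x s) - G (y s))‖ ≤
      (2 * M ^ 2 / ω) * (Real.exp (ω * tb) - 1) * Real.exp (ω * tb) * ℓ * ‖u - v‖ := by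
  -- G is continuous
  have hGc : Continuous G := by
    have : LipschitzWith ℓ.toNNReal G :=
      LipschitzWith.of_dist_le_mul (fun a b => by
        simp only [dist_eq_norm]
        calc ‖G a - G b‖ ≤ ℓ * ‖a - b‖ := hG a b
          _ ≤ ℓ.toNNReal * ‖a - b‖ :=
            mul_le_mul_of_nonneg_right (Real.le_coe_toNNReal ℓ) (norm_nonneg _))
    exact this.continuous
  set C := M * Real.exp (ω * tb) with hCdef
  have hC : 0 < C := mul_pos hM (Real.exp_pos _)
  -- uniform bound on [0, tb]
  have hCbound : ∀ r : ℝ, 0 ≤ r → r ≤ tb → ‖T r‖ ≤ C := by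
    intro r hr hrtb
    refine (hTbound r hr).trans ?_
    apply mul_le_mul_of_nonneg_left _ hM.le
    exact Real.exp_le_exp.2 (mul_le_mul_of_nonneg_left hrtb hω.le)
  -- maximizer of ‖x - y‖ on [0, tb]
  have hxy : ContinuousOn (fun t => ‖x t - y t‖) (Set.Icc 0 tb) := (hx.sub hy).norm
  obtain ⟨t₀, ht₀mem, ht₀max⟩ := isCompact_Icc.exists_isMaxOn
    (Set.nonempty_Icc.2 htb.le) hxy
  set S := ‖x t₀ - y t₀‖ with hSdef
  have hS0 : 0 ≤ S := norm_nonneg _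
  have hSmax : ∀ s ∈ Set.Icc (0:ℝ) tb, ‖x s - y s‖ ≤ S := fun s hs => ht₀max hs
  -- integrability facts for each t ∈ [0, tb]
  have hsub : ∀ t ∈ Set.Icc (0:ℝ) tb, Set.Icc (0:ℝ) t ⊆ Set.Icc (0:ℝ) tb :=
    fun t ht => Set.Icc_subset_Icc le_rfl ht.2
  -- key continuity: for w continuous on [0, tb], s ↦ T(t-s)(w s) continuous on [0, t]
  have hcont : ∀ t ∈ Set.Icc (0:ℝ) tb, ∀ w : ℝ → X, ContinuousOn w (Set.Icc 0 tb) →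
      ContinuousOn (fun s => T (t - s) (w s)) (Set.Icc 0 t) := by
    intro t ht w hw
    apply strong_cont_aux T C hTcont t
    · intro r hr hrt
      exact hCbound r hr (hrt.trans ht.2)
    · exact hw.mono (hsub t ht)
  have hwc : ContinuousOn (fun s => G (x s) - G (y s)) (Set.Icc 0 tb) :=
    (hGc.comp_continuousOn hx).sub (hGc.comp_continuousOn hy)
  have hexp1 : (1:ℝ) ≤ Real.exp (ω * tb) := by
    rw [← Real.exp_zero]
    exact Real.exp_le_exp.2 (by positivity)
  -- the integral bound
  have hintb : ∀ t ∈ Set.Icc (0:ℝ) tb,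
      ‖∫ s in (0:ℝ)..t, T (t - s) (G (x s) - G (y s))‖
        ≤ M * ℓ * S * ((Real.exp (ω * t) - 1) / ω) := by
    intro t ht
    have hfc := hcont t ht _ hwc
    have hgint : IntervalIntegrable (fun s => M * ℓ * S * Real.exp (ω * (t - s)))
        MeasureTheory.volume 0 t :=
      (Continuous.intervalIntegrable (by fun_prop) 0 t)
    calc ‖∫ s in (0:ℝ)..t, T (t - s) (G (x s) - G (y s))‖
        ≤ ∫ s in (0:ℝ)..t, ‖T (t - s) (G (x s) - G (y s))‖ :=
          intervalIntegral.norm_integral_le_integral_norm ht.1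
      _ ≤ ∫ s in (0:ℝ)..t, M * ℓ * S * Real.exp (ω * (t - s)) := by
          apply intervalIntegral.integral_mono_on ht.1
            (hfc.norm.intervalIntegrable_of_Icc ht.1) hgint
          intro s hs
          have hts : (0:ℝ) ≤ t - s := by linarith [hs.2]
          have hstb : s ∈ Set.Icc (0:ℝ) tb := hsub t ht hs
          have h1 : ‖G (x s) - G (y s)‖ ≤ ℓ * S :=
            (hG _ _).trans (mul_le_mul_of_nonneg_left (hSmax s hstb) hℓ)
          calc ‖T (t - s) (G (x s) - G (y s))‖
              ≤ ‖T (t - s)‖ * ‖G (x s) - G (y s)‖ := (T (t - s)).le_opNorm _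
            _ ≤ (M * Real.exp (ω * (t - s))) * (ℓ * S) := by
                apply mul_le_mul (hTbound _ hts) h1 (norm_nonneg _)
                positivity
            _ = M * ℓ * S * Real.exp (ω * (t - s)) := by ring
      _ = M * ℓ * S * ((Real.exp (ω * t) - 1) / ω) := by
          rw [intervalIntegral.integral_const_mul, exp_integral_aux ω t hω]
  -- difference equation
  have hkey : ∀ t ∈ Set.Icc (0:ℝ) tb,
      x t - y t = T t (u - v) + ∫ s in (0:ℝ)..t, T (t - s) (G (x s) - G (y s)) := by
    intro t ht
    have hix : IntervalIntegrable (fun s => T (t - s) (G (x s))) MeasureTheory.volume 0 t :=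
      (hcont t ht _ (hGc.comp_continuousOn hx)).intervalIntegrable_of_Icc ht.1
    have hiy : IntervalIntegrable (fun s => T (t - s) (G (y s))) MeasureTheory.volume 0 t :=
      (hcont t ht _ (hGc.comp_continuousOn hy)).intervalIntegrable_of_Icc ht.1
    have hisub : (∫ s in (0:ℝ)..t, T (t - s) (G (x s) - G (y s)))
        = (∫ s in (0:ℝ)..t, T (t - s) (G (x s))) - ∫ s in (0:ℝ)..t, T (t - s) (G (y s)) := by
      rw [← intervalIntegral.integral_sub hix hiy]
      congr 1
      funext s
      exact map_sub (T (t - s)) _ _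
    rw [hxe t ht, hye t ht, hisub, map_sub]
    abel
  -- the main a priori bound
  have hb : ∀ t ∈ Set.Icc (0:ℝ) tb,
      ‖x t - y t‖ ≤ C * ‖u - v‖ + M * ℓ * S * ((Real.exp (ω * tb) - 1) / ω) := by
    intro t ht
    rw [hkey t ht]
    have h1 : ‖T t (u - v)‖ ≤ C * ‖u - v‖ :=
      ((T t).le_opNorm _).trans
        (mul_le_mul_of_nonneg_right (hCbound t ht.1 ht.2) (norm_nonneg _))
    have h2 : M * ℓ * S * ((Real.exp (ω * t) - 1) / ω)
        ≤ M * ℓ * S * ((Real.exp (ω * tb) - 1) / ω) := by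
      have : Real.exp (ω * t) ≤ Real.exp (ω * tb) :=
        Real.exp_le_exp.2 (mul_le_mul_of_nonneg_left ht.2 hω.le)
      have hMS : 0 ≤ M * ℓ * S := by positivity
      apply mul_le_mul_of_nonneg_left _ hMS
      gcongr
    calc ‖T t (u - v) + ∫ s in (0:ℝ)..t, T (t - s) (G (x s) - G (y s))‖
        ≤ ‖T t (u - v)‖ + ‖∫ s in (0:ℝ)..t, T (t - s) (G (x s) - G (y s))‖ := norm_add_le _ _
      _ ≤ C * ‖u - v‖ + M * ℓ * S * ((Real.exp (ω * tb) - 1) / ω) :=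
          add_le_add h1 ((hintb t ht).trans h2)
  -- fixed point argument
  have hSb : S ≤ 2 * C * ‖u - v‖ := by
    have h := hb t₀ ht₀mem
    have hks : M * ℓ * S * ((Real.exp (ω * tb) - 1) / ω) ≤ S / 2 := by
      calc M * ℓ * S * ((Real.exp (ω * tb) - 1) / ω)
          = S * (ℓ * (M / ω) * (Real.exp (ω * tb) - 1)) := by ring
        _ ≤ S * (1 / 2) := mul_le_mul_of_nonneg_left hsmall.le hS0
        _ = S / 2 := by ring
    rw [← hSdef] at h
    linarith
  constructor
  · intro t ht
    calc ‖x t - y t‖ ≤ S := hSmax t ht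
      _ ≤ 2 * C * ‖u - v‖ := hSb
      _ = 2 * M * Real.exp (ω * tb) * ‖u - v‖ := by rw [hCdef]; ring
  · have h2 := hintb tb ⟨htb.le, le_rfl⟩
    have hnn : (0:ℝ) ≤ M * ℓ * ((Real.exp (ω * tb) - 1) / ω) := by
      have : (0:ℝ) ≤ Real.exp (ω * tb) - 1 := by linarith
      positivity
    calc ‖∫ s in (0:ℝ)..tb, T (tb - s) (G (x s) - G (y s))‖
        ≤ M * ℓ * S * ((Real.exp (ω * tb) - 1) / ω) := h2
      _ = (M * ℓ * ((Real.exp (ω * tb) - 1) / ω)) * S := by ring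
      _ ≤ (M * ℓ * ((Real.exp (ω * tb) - 1) / ω)) * (2 * C * ‖u - v‖) :=
          mul_le_mul_of_nonneg_left hSb hnn
      _ = (2 * M ^ 2 / ω) * (Real.exp (ω * tb) - 1) * Real.exp (ω * tb) * ℓ * ‖u - v‖ := by
          rw [hCdef]; ring
end

section
/- For every ε > 0 and every N > 0 there exists h₀ ∈ (0, 1/e) such that for all real h with 0 < h < h₀: (i) every real solution x of x + e^{−h·x} = 0 satisfies |x + 1| < ε or x < −N; (ii) there exists a real solution x with |x + 1| < ε; and (iii) there exists a real solution x with x < −N. -/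
set_option maxHeartbeats 1000000


/-- Example 2 of the paper (Section 5.2): as the delay `h` shrinks, the real
characteristic roots of `x + e^{−hx} = 0` split into one root near `−1` and one
root tending to `−∞`. -/
theorem real_roots_small_delay (ε N : ℝ) (hε : 0 < ε) (hN : 0 < N) :
    ∃ h₀ : ℝ, 0 < h₀ ∧ h₀ < 1 / Real.exp 1 ∧
      ∀ h : ℝ, 0 < h → h < h₀ →
        (∀ x : ℝ, x + Real.exp (-h * x) = 0 → |x + 1| < ε ∨ x < -N) ∧
        (∃ x : ℝ, x + Real.exp (-h * x) = 0 ∧ |x + 1| < ε) ∧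
        (∃ x : ℝ, x + Real.exp (-h * x) = 0 ∧ x < -N) := by
  set δ : ℝ := min ε 1 / 2 with hδdef
  have hmin : 0 < min ε 1 := lt_min hε one_pos
  have hδpos : 0 < δ := by positivity
  have hδε : δ < ε := by
    have : min ε 1 ≤ ε := min_le_left _ _
    simp only [hδdef]; linarith
  have hδ1 : δ ≤ 1 / 2 := by
    have : min ε 1 ≤ 1 := min_le_right _ _
    simp only [hδdef]; linarith
  set L : ℝ := 2 * max N 1 with hLdef
  have hL2 : 2 ≤ L := by
    have : (1:ℝ) ≤ max N 1 := le_max_right _ _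
    simp only [hLdef]; linarith
  have hLN : 2 * N ≤ L := by
    have : N ≤ max N 1 := le_max_left _ _
    simp only [hLdef]; linarith
  have hLpos : 0 < L := by linarith
  have hlog1 : 0 < Real.log (1 + δ) := Real.log_pos (by linarith)
  have hlogL : 0 < Real.log L := Real.log_pos (by linarith)
  refine ⟨min (min (Real.log (1 + δ) / (1 + δ)) (Real.log L / L))
      (min (Real.log (1 + δ) / N) ((Real.exp 1)⁻¹ / 2)), ?_, ?_, ?_⟩
  · have h1 : 0 < Real.log (1 + δ) / (1 + δ) := by positivity
    have h2 : 0 < Real.log L / L := by positivity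
    have h3 : 0 < Real.log (1 + δ) / N := by positivity
    have h4 : 0 < (Real.exp 1)⁻¹ / 2 := by positivity
    exact lt_min (lt_min h1 h2) (lt_min h3 h4)
  · have h4 : (Real.exp 1)⁻¹ / 2 < 1 / Real.exp 1 := by
      rw [one_div]
      have : 0 < (Real.exp 1)⁻¹ := by positivity
      linarith
    exact lt_of_le_of_lt (le_trans (min_le_right _ _) (min_le_right _ _)) h4
  · intro h hh hh0
    have hA : h < Real.log (1 + δ) / (1 + δ) :=
      lt_of_lt_of_le hh0 (le_trans (min_le_left _ _) (min_le_left _ _))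
    have hB : h < Real.log L / L :=
      lt_of_lt_of_le hh0 (le_trans (min_le_left _ _) (min_le_right _ _))
    have hC : h < Real.log (1 + δ) / N :=
      lt_of_lt_of_le hh0 (le_trans (min_le_right _ _) (min_le_left _ _))
    have hcont : Continuous fun x : ℝ => x + Real.exp (-h * x) := by continuity
    -- roots are < -1
    have hroot_lt : ∀ x : ℝ, x + Real.exp (-h * x) = 0 → x < -1 := by
      intro x hx
      have hx0 : x < 0 := by nlinarith [Real.exp_pos (-h * x)]
      have : 1 < Real.exp (-h * x) := by
        rw [show (1:ℝ) = Real.exp 0 by simp]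
        exact Real.exp_lt_exp.mpr (by nlinarith)
      linarith
    refine ⟨?_, ?_, ?_⟩
    · -- dichotomy
      intro x hx
      by_cases hxN : x < -N
      · exact Or.inr hxN
      · left
        push_neg at hxN
        have hx1 : x < -1 := hroot_lt x hx
        rw [abs_lt]
        constructor
        · -- x + 1 > -ε, i.e. x > -1 - ε
          by_contra hcon
          push_neg at hcon
          have hxle : x ≤ -1 - ε := by linarith
          have h1 : Real.exp (-h * x) = -x := by linarith
          have h2 : -h * x ≤ h * N := by nlinarith
          have h3 : Real.exp (-h * x) ≤ Real.exp (h * N) := Real.exp_le_exp.mpr h2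
          have h4 : h * N < Real.log (1 + δ) := by
            have := (lt_div_iff₀ hN).mp hC
            linarith
          have h5 : Real.exp (h * N) < 1 + δ := by
            calc Real.exp (h * N) < Real.exp (Real.log (1 + δ)) := Real.exp_lt_exp.mpr h4
              _ = 1 + δ := Real.exp_log (by linarith)
          nlinarith
        · linarith
    · -- root near -1
      have hfa : (-1 - δ) + Real.exp (-h * (-1 - δ)) < 0 := by
        have h1 : h * (1 + δ) < Real.log (1 + δ) := by
          have := (lt_div_iff₀ (by linarith : (0:ℝ) < 1 + δ)).mp hA
          linarith
        have h2 : Real.exp (-h * (-1 - δ)) < 1 + δ := by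
          have : Real.exp (-h * (-1 - δ)) < Real.exp (Real.log (1 + δ)) :=
            Real.exp_lt_exp.mpr (by linarith)
          rwa [Real.exp_log (by linarith)] at this
        linarith
      have hfb : 0 < (-1 + δ) + Real.exp (-h * (-1 + δ)) := by
        have h1 : (0:ℝ) ≤ -h * (-1 + δ) := by nlinarith
        have h2 : (1:ℝ) ≤ Real.exp (-h * (-1 + δ)) := by
          have := Real.add_one_le_exp (-h * (-1 + δ))
          linarith
        linarith
      have hab : (-1 - δ : ℝ) ≤ -1 + δ := by linarith
      have := intermediate_value_Icc hab (hcont.continuousOn)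
      obtain ⟨x, hxmem, hxval⟩ := this ⟨le_of_lt hfa, le_of_lt hfb⟩
      refine ⟨x, hxval, ?_⟩
      rw [abs_lt]
      obtain ⟨hx1, hx2⟩ := hxmem
      constructor <;> linarith
    · -- far root
      set K : ℝ := 4 / h ^ 2 + L with hKdef
      have hKL : L < K := by
        have : 0 < 4 / h ^ 2 := by positivity
        simp only [hKdef]; linarith
      have hfK : 0 < -K + Real.exp (-h * -K) := by
        have hs := Real.add_one_le_exp (h * K / 2)
        set s := Real.exp (h * K / 2) with hsdef
        have hspos : 0 < s := Real.exp_pos _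
        have hsq : Real.exp (-h * -K) = s * s := by
          rw [hsdef, ← Real.exp_add]; ring_nf
        have hhalf : h * K / 2 = 2 / h + h * L / 2 := by
          simp only [hKdef]; field_simp; ring
        have h2h : 2 / h * (2 / h) = 4 / h ^ 2 := by field_simp; ring
        have hgt : K < s * s := by
          have hs2 : 1 + (2 / h + h * L / 2) ≤ s := by rw [← hhalf]; linarith
          have hp1 : 0 < 2 / h := by positivity
          have hp2 : 0 < h * L / 2 := by positivity
          have hab2 : 2 / h * (h * L / 2) = L := by field_simp
          simp only [hKdef]
          nlinarith [mul_le_mul hs2 hs2 (by positivity) hspos.le, h2h, hab2, hp1, hp2,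
            mul_self_nonneg (h * L / 2)]
        rw [hsq]; linarith
      have hfL : -L + Real.exp (-h * -L) < 0 := by
        have h1 : h * L < Real.log L := by
          have := (lt_div_iff₀ hLpos).mp hB
          linarith
        have h2 : Real.exp (-h * -L) < L := by
          have : Real.exp (-h * -L) < Real.exp (Real.log L) :=
            Real.exp_lt_exp.mpr (by linarith)
          rwa [Real.exp_log hLpos] at this
        linarith
      have hab : (-K : ℝ) ≤ -L := by linarith
      have := intermediate_value_Icc' hab (hcont.continuousOn)
      obtain ⟨x, hxmem, hxval⟩ := this ⟨le_of_lt hfL, le_of_lt hfK⟩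
      refine ⟨x, hxval, ?_⟩
      obtain ⟨hx1, hx2⟩ := hxmem
      linarith
end

section
/- Let X be a real Banach space, and let b < η < a be real numbers and K₁, K₂ > 0. Let U(t), for t ≤ 0, and V(t), for t ≥ 0, be bounded linear operators on X with t ↦ U(t)x continuous on (−∞, 0] and t ↦ V(t)x continuous on [0, ∞) for every x ∈ X, and with ‖U(t)‖ ≤ K₁·e^{a·t} for all t ≤ 0 and ‖V(t)‖ ≤ K₂·e^{b·t} for all t ≥ 0. Let F : (−∞, 0] → X be continuous with ‖F‖_{η} := sup_{t ≤ 0} e^{−η·t}·‖F(t)‖ < ∞. Then for every t ≤ 0 the function s ↦ V(t − s)·F(s) is Bochner integrable on (−∞, t], and the function (𝒦F)(t) := −∫_t^0 U(t − s)·F(s) ds + ∫_{−∞}^t V(t − s)·F(s) ds satisfies e^{−η·t}·‖(𝒦F)(t)‖ ≤ (K₁/(a − η) + K₂/(η − b))·‖F‖_{η} for all t ≤ 0. -/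
/-!
With `M` the weighted sup norm of `F`, both integrands are dominated by `K M e^{ct} e^{(η-c)s}`
(`c = a` on `[t, 0]`, `c = b` on `(-∞, t]`). As `b < η < a`, these dominating functions are
integrable on `(t, ∞)` and `(-∞, t]` respectively, with integrals `K M e^{ηt}/(a-η)` and
`K M e^{ηt}/(η-b)`. The second integrand is continuous, since `V` is strongly continuous with
norm dominated by a continuous function, so domination also gives its integrability.
-/

open MeasureTheory Set Filter Real Topology

section StronglyContinuous

variable {α 𝕜 E E' : Type*} [TopologicalSpace α] [NontriviallyNormedField 𝕜]
  [NormedAddCommGroup E] [NormedSpace 𝕜 E] [NormedAddCommGroup E'] [NormedSpace 𝕜 E']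
  {W : α → E →L[𝕜] E'} {f : α → E} {C : α → ℝ} {s : Set α}

theorem ContinuousWithinAt.clm_apply_of_norm_le {a₀ : α}
    (hW : ContinuousWithinAt (fun a => W a (f a₀)) s a₀) (hf : ContinuousWithinAt f s a₀)
    (hC : ContinuousWithinAt C s a₀) (hWC : ∀ a ∈ s, ‖W a‖ ≤ C a) :
    ContinuousWithinAt (fun a => W a (f a)) s a₀ := by
  rw [ContinuousWithinAt, tendsto_iff_norm_sub_tendsto_zero]
  have hlim : Tendsto (fun a => C a * ‖f a - f a₀‖ + ‖W a (f a₀) - W a₀ (f a₀)‖)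
      (𝓝[s] a₀) (𝓝 0) := by
    simpa using (hC.tendsto.mul (tendsto_iff_norm_sub_tendsto_zero.1 hf)).add
      (tendsto_iff_norm_sub_tendsto_zero.1 hW)
  refine squeeze_zero' (Eventually.of_forall fun _ => norm_nonneg _) ?_ hlim
  filter_upwards [self_mem_nhdsWithin] with a ha
  calc ‖W a (f a) - W a₀ (f a₀)‖ = ‖W a (f a - f a₀) + (W a (f a₀) - W a₀ (f a₀))‖ := by
        rw [map_sub, sub_add_sub_cancel]
    _ ≤ ‖W a‖ * ‖f a - f a₀‖ + ‖W a (f a₀) - W a₀ (f a₀)‖ :=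
        (norm_add_le _ _).trans (add_le_add_left ((W a).le_opNorm _) _)
    _ ≤ C a * ‖f a - f a₀‖ + ‖W a (f a₀) - W a₀ (f a₀)‖ := by gcongr; exact hWC a ha

theorem ContinuousOn.clm_apply_of_norm_le (hW : ∀ x, ContinuousOn (fun a => W a x) s)
    (hf : ContinuousOn f s) (hC : ContinuousOn C s) (hWC : ∀ a ∈ s, ‖W a‖ ≤ C a) :
    ContinuousOn (fun a => W a (f a)) s := fun a ha =>
  (hW (f a) a ha).clm_apply_of_norm_le (hf a ha) (hC a ha) hWC

end StronglyContinuous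

theorem norm_le_sSup_image_mul_exp {E : Type*} [Norm E] {F : ℝ → E} {η : ℝ} {S : Set ℝ}
    (hF : BddAbove ((fun t => exp (-η * t) * ‖F t‖) '' S)) {s : ℝ} (hs : s ∈ S) :
    ‖F s‖ ≤ sSup ((fun t => exp (-η * t) * ‖F t‖) '' S) * exp (η * s) := by
  calc ‖F s‖ = exp (-η * s) * ‖F s‖ * exp (η * s) := by
        rw [mul_right_comm, ← exp_add, neg_mul, neg_add_cancel, exp_zero, one_mul]
    _ ≤ _ := by gcongr; exact le_csSup hF ⟨s, hs, rfl⟩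

section ExponentialBounds

variable {E E' : Type*} [NormedAddCommGroup E] [NormedSpace ℝ E]
  [NormedAddCommGroup E'] [NormedSpace ℝ E']

theorem ContinuousLinearMap.norm_apply_le_mul_exp {W : E →L[ℝ] E'} {x : E} {K M c η t s : ℝ}
    (hW : ‖W‖ ≤ K * exp (c * (t - s))) (hx : ‖x‖ ≤ M * exp (η * s)) :
    ‖W x‖ ≤ K * M * exp (c * t) * exp ((η - c) * s) := by
  have hexp : exp (c * (t - s)) * exp (η * s) = exp (c * t) * exp ((η - c) * s) := by
    rw [← exp_add, ← exp_add]; ring_nf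
  calc ‖W x‖ ≤ ‖W‖ * ‖x‖ := W.le_opNorm x
    _ ≤ K * exp (c * (t - s)) * (M * exp (η * s)) :=
        mul_le_mul hW hx (norm_nonneg _) ((norm_nonneg _).trans hW)
    _ = K * M * exp (c * t) * exp ((η - c) * s) := by linear_combination K * M * hexp

variable {W : ℝ → E →L[ℝ] E'} {F : ℝ → E} {K M c η t : ℝ}

theorem integrableOn_Iic_clm_apply_sub (hcη : c < η)
    (hWcont : ∀ x, ContinuousOn (fun r => W r x) (Ici 0))
    (hW : ∀ r, 0 ≤ r → ‖W r‖ ≤ K * exp (c * r)) (hFcont : ContinuousOn F (Iic t))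
    (hF : ∀ s ≤ t, ‖F s‖ ≤ M * exp (η * s)) :
    IntegrableOn (fun s => W (t - s) (F s)) (Iic t) := by
  have hcont : ContinuousOn (fun s => W (t - s) (F s)) (Iic t) :=
    ContinuousOn.clm_apply_of_norm_le (C := fun s => K * exp (c * (t - s)))
      (fun x => (hWcont x).comp (by fun_prop) fun s hs => mem_Ici.2 (sub_nonneg.2 hs))
      hFcont (by fun_prop) fun s hs => hW _ (sub_nonneg.2 hs)
  refine Integrable.mono' ((integrableOn_exp_mul_Iic (sub_pos.2 hcη) t).const_mul
    (K * M * exp (c * t))) (hcont.aestronglyMeasurable measurableSet_Iic) ?_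
  filter_upwards [ae_restrict_mem measurableSet_Iic] with s hs
  exact (W (t - s)).norm_apply_le_mul_exp (hW _ (sub_nonneg.2 hs)) (hF s hs)

theorem norm_setIntegral_Iic_clm_apply_sub_le (hcη : c < η)
    (hW : ∀ r, 0 ≤ r → ‖W r‖ ≤ K * exp (c * r)) (hF : ∀ s ≤ t, ‖F s‖ ≤ M * exp (η * s)) :
    ‖∫ s in Iic t, W (t - s) (F s)‖ ≤ K * M * exp (η * t) / (η - c) := by
  have hηc : 0 < η - c := sub_pos.2 hcη
  calc ‖∫ s in Iic t, W (t - s) (F s)‖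
      ≤ ∫ s in Iic t, K * M * exp (c * t) * exp ((η - c) * s) := by
        refine norm_integral_le_of_norm_le ((integrableOn_exp_mul_Iic hηc t).const_mul _) ?_
        filter_upwards [ae_restrict_mem measurableSet_Iic] with s hs
        exact (W (t - s)).norm_apply_le_mul_exp (hW _ (sub_nonneg.2 hs)) (hF s hs)
    _ = K * M * exp (η * t) / (η - c) := by
        rw [integral_const_mul, integral_exp_mul_Iic hηc, mul_div_assoc', mul_assoc, ← exp_add,
          show c * t + (η - c) * t = η * t by ring]

theorem norm_intervalIntegral_clm_apply_sub_le (hηc : η < c) (ht : t ≤ 0)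
    (hW : ∀ r ≤ 0, ‖W r‖ ≤ K * exp (c * r)) (hF : ∀ s ≤ 0, ‖F s‖ ≤ M * exp (η * s)) :
    ‖∫ s in t..0, W (t - s) (F s)‖ ≤ K * M * exp (η * t) / (c - η) := by
  have hK : 0 ≤ K := by simpa using (norm_nonneg _).trans (hW 0 le_rfl)
  have hM : 0 ≤ M := by simpa using (norm_nonneg _).trans (hF 0 le_rfl)
  have hg : IntegrableOn (fun s => K * M * exp (c * t) * exp ((η - c) * s)) (Ioi t) :=
    (integrableOn_exp_mul_Ioi (sub_neg.2 hηc) t).const_mul _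
  calc ‖∫ s in t..0, W (t - s) (F s)‖
      ≤ ∫ s in Ioc t 0, K * M * exp (c * t) * exp ((η - c) * s) := by
        rw [intervalIntegral.integral_of_le ht]
        refine norm_integral_le_of_norm_le (hg.mono_set Ioc_subset_Ioi_self) ?_
        filter_upwards [ae_restrict_mem measurableSet_Ioc] with s hs
        exact (W (t - s)).norm_apply_le_mul_exp (hW _ (by linarith [hs.1])) (hF s hs.2)
    _ ≤ ∫ s in Ioi t, K * M * exp (c * t) * exp ((η - c) * s) :=
        setIntegral_mono_set hg (Eventually.of_forall fun _ => by positivity)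
          Ioc_subset_Ioi_self.eventuallyLE
    _ = K * M * exp (η * t) / (c - η) := by
        rw [integral_const_mul, integral_exp_mul_Ioi (sub_neg.2 hηc), mul_div_assoc', mul_neg,
          mul_assoc, ← exp_add, show c * t + (η - c) * t = η * t by ring, ← neg_sub c η, div_neg,
          neg_div, neg_neg]

end ExponentialBounds

open MeasureTheory in
theorem lyapunov_perron_bounded_general {X : Type*} [NormedAddCommGroup X]
    [NormedSpace ℝ X]
    (a b η K₁ K₂ : ℝ) (hbη : b < η) (hηa : η < a)
    (U V : ℝ → X →L[ℝ] X)
    (hVcont : ∀ x : X, ContinuousOn (fun t => V t x) (Set.Ici (0 : ℝ)))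
    (hUbound : ∀ t : ℝ, t ≤ 0 → ‖U t‖ ≤ K₁ * Real.exp (a * t))
    (hVbound : ∀ t : ℝ, 0 ≤ t → ‖V t‖ ≤ K₂ * Real.exp (b * t))
    (F : ℝ → X) (hFcont : ContinuousOn F (Set.Iic (0 : ℝ)))
    (hFbdd : BddAbove ((fun t => Real.exp (-η * t) * ‖F t‖) '' Set.Iic (0 : ℝ))) :
    ∀ t : ℝ, t ≤ 0 →
      IntegrableOn (fun s => V (t - s) (F s)) (Set.Iic t) ∧
      Real.exp (-η * t) *
        ‖(-(∫ s in t..(0 : ℝ), U (t - s) (F s))) +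
          ∫ s in Set.Iic t, V (t - s) (F s)‖ ≤
        (K₁ / (a - η) + K₂ / (η - b)) *
          sSup ((fun t => Real.exp (-η * t) * ‖F t‖) '' Set.Iic (0 : ℝ)) := by
  intro t ht
  set M := sSup ((fun t => Real.exp (-η * t) * ‖F t‖) '' Set.Iic (0 : ℝ))
  have hF : ∀ s ≤ 0, ‖F s‖ ≤ M * exp (η * s) := fun s hs => norm_le_sSup_image_mul_exp hFbdd hs
  have hFt : ∀ s ≤ t, ‖F s‖ ≤ M * exp (η * s) := fun s hs => hF s (hs.trans ht)
  refine ⟨integrableOn_Iic_clm_apply_sub hbη hVcont hVbound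
    (hFcont.mono (Iic_subset_Iic.2 ht)) hFt, ?_⟩
  have hU := norm_intervalIntegral_clm_apply_sub_le hηa ht hUbound hF
  have hV := norm_setIntegral_Iic_clm_apply_sub_le hbη hVbound hFt
  calc exp (-η * t) * ‖-(∫ s in t..0, U (t - s) (F s)) + ∫ s in Iic t, V (t - s) (F s)‖
      ≤ exp (-η * t) * (K₁ * M * exp (η * t) / (a - η) + K₂ * M * exp (η * t) / (η - b)) := by
        gcongr
        exact (norm_add_le _ _).trans (by rw [norm_neg]; gcongr)
    _ = (K₁ / (a - η) + K₂ / (η - b)) * M := by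
        rw [neg_mul, exp_neg]
        field_simp

open MeasureTheory in
/-- Lemma C.2 of the paper: boundedness of the Lyapunov–Perron operator `𝒦` on the
weighted space `BC^{−η}((−∞,0]; X)`, with the explicit bound
`K₁/(a − η) + K₂/(η − b)` on its norm. -/
theorem lyapunov_perron_bounded {X : Type*} [NormedAddCommGroup X]
    [NormedSpace ℝ X] [CompleteSpace X]
    (a b η K₁ K₂ : ℝ) (hbη : b < η) (hηa : η < a) (hK₁ : 0 < K₁) (hK₂ : 0 < K₂)
    (U V : ℝ → X →L[ℝ] X)
    (hUcont : ∀ x : X, ContinuousOn (fun t => U t x) (Set.Iic (0 : ℝ)))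
    (hVcont : ∀ x : X, ContinuousOn (fun t => V t x) (Set.Ici (0 : ℝ)))
    (hUbound : ∀ t : ℝ, t ≤ 0 → ‖U t‖ ≤ K₁ * Real.exp (a * t))
    (hVbound : ∀ t : ℝ, 0 ≤ t → ‖V t‖ ≤ K₂ * Real.exp (b * t))
    (F : ℝ → X) (hFcont : ContinuousOn F (Set.Iic (0 : ℝ)))
    (hFbdd : BddAbove ((fun t => Real.exp (-η * t) * ‖F t‖) '' Set.Iic (0 : ℝ))) :
    ∀ t : ℝ, t ≤ 0 →
      IntegrableOn (fun s => V (t - s) (F s)) (Set.Iic t) ∧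
      Real.exp (-η * t) *
        ‖(-(∫ s in t..(0 : ℝ), U (t - s) (F s))) +
          ∫ s in Set.Iic t, V (t - s) (F s)‖ ≤
        (K₁ / (a - η) + K₂ / (η - b)) *
          sSup ((fun t => Real.exp (-η * t) * ‖F t‖) '' Set.Iic (0 : ℝ)) :=
  lyapunov_perron_bounded_general a b η K₁ K₂ hbη hηa U V hVcont hUbound hVbound F hFcont hFbdd
end

section
/- Let X be a real Banach space and P₁, P₂ : X → X continuous linear maps with P₁ + P₂ = id, P₁∘P₁ = P₁ and P₁∘P₂ = 0. Let L : X → X be a bounded linear operator with L∘P₁ = P₁∘L, and suppose there is a bounded linear operator L' : X → X with L'∘L∘P₁ = P₁, L∘L'∘P₁ = P₁ and P₁∘L'∘P₁ = L'∘P₁. Let C₁ ≥ 1, C₂ ≥ 1 and α₁ > α₂ ≥ 0 be constants such that for every integer j ≥ 0: ‖(L')^j∘P₁‖ ≤ C₁·α₁^{−j} and ‖L^j∘P₂‖ ≤ C₂·α₂^{j} (with the convention α₂⁰ = 1). Let N : X → X be globally Lipschitz with constant ℓ and N(0) = 0, and let γ₂ ≤ γ₁ be real numbers with α₂ < e^{γ₂},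 e^{γ₁} < α₁, and (C₁/(α₁ − s) + C₂/(s − α₂))·ℓ < 1 for every s ∈ [e^{γ₂}, e^{γ₁}]. Set F := L + N. Then there exists a globally Lipschitz map φ : range(P₁) → range(P₂) with φ(0) = 0 such that the set W := { v + φ(v) : v ∈ range(P₁) } satisfies: (i) F(W) ⊆ W; (ii) for every u ∈ W there exists a sequence (u_k)_{k ∈ ℕ} with u₀ = u, u_k ∈ W and F(u_{k+1}) = u_k for all k, such that for every ε > 0 there is a constant C with ‖u_k‖ ≤ C·e^{(−γ₁ + ε)·k} for all k; and (iii) conversely, if (u_k)_{k ∈ ℕ} is any sequence in X with F(u_{k+1}) = u_k for all k and such that for every ε > 0 there is a constant C with ‖u_k‖ ≤ C·e^{(−γ₂ + ε)·k} for all k, then u_k ∈ W for every k. -/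
/-!
A negative semiorbit `u` of `F = L + N` with `‖u k‖ ≤ M s⁻ᵏ`, `α₂ < s < α₁`, is the same thing as
a fixed point of the Lyapunov–Perron operator
`u ↦ (k ↦ L'ᵏ P₁ ξ - ∑_{i<k} L'^(k-i) P₁ N(u (i+1)) + ∑_j Lʲ P₂ N(u (k+1+j)))` with
`P₁ ξ = P₁ (u 0)`. For the weighted norm `sup_k sᵏ ‖u k‖` the dichotomy bounds make this operator
Lipschitz in `u` with constant `κ(s) = (C₁ / (α₁ - s) + C₂ / (s - α₂)) ℓ`, and in `P₁ ξ` with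
constant `C₁`. When `κ(s) < 1` it therefore has a unique fixed point `U ξ`, Lipschitz in `P₁ ξ`;
we take `s₁ = e^γ₁` and `φ ξ = P₂ (U ξ 0)`. The gap condition is open, so it also holds at some
`s₂` slightly below `e^γ₂`. Semiorbits as in (iii) decay at rate `s₂`, and uniqueness at `s₂` puts
them on the graph. Invariance follows by prepending `F w` to the semiorbit through `w`.
-/

open Finset Filter Topology
open scoped NNReal BoundedContinuousFunction

namespace ChenHaleTan

section Sequences

variable {E E' : Type*} [SeminormedAddCommGroup E] [SeminormedAddCommGroup E']

theorem nonneg_of_norm_le_mul_inv_pow {u : ℕ → E} {M s : ℝ} (hu : ∀ k, ‖u k‖ ≤ M * s⁻¹ ^ k) :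
    0 ≤ M := by
  simpa using (norm_nonneg _).trans (hu 0)

theorem norm_le_mul_inv_pow_mono {u : ℕ → E} {M s₁ s₂ : ℝ} (hs₂ : 0 < s₂) (hs₂₁ : s₂ ≤ s₁)
    (hu : ∀ k, ‖u k‖ ≤ M * s₁⁻¹ ^ k) (k : ℕ) : ‖u k‖ ≤ M * s₂⁻¹ ^ k := by
  have hs₁ : 0 < s₁ := hs₂.trans_le hs₂₁
  have hM := nonneg_of_norm_le_mul_inv_pow hu
  exact (hu k).trans (by gcongr)

theorem norm_map_sub_map_le {N : E → E'} {K : ℝ≥0} {u v : ℕ → E} {M s : ℝ}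
    (hN : LipschitzWith K N) (huv : ∀ m, ‖u m - v m‖ ≤ M * s⁻¹ ^ m) (m : ℕ) :
    ‖N (u m) - N (v m)‖ ≤ K * M * s⁻¹ ^ m :=
  (hN.norm_sub_le _ _).trans (by rw [mul_assoc]; exact mul_le_mul_of_nonneg_left (huv m) K.2)

theorem norm_map_le {N : E → E'} {K : ℝ≥0} {u : ℕ → E} {M s : ℝ} (hN : LipschitzWith K N)
    (hN0 : N 0 = 0) (hu : ∀ m, ‖u m‖ ≤ M * s⁻¹ ^ m) (m : ℕ) : ‖(N ∘ u) m‖ ≤ K * M * s⁻¹ ^ m := by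
  simpa [hN0] using norm_map_sub_map_le hN (v := 0) (by simpa using hu) m

theorem sum_range_inv_pow_mul_inv_pow_le {a s : ℝ} (hs : 0 < s) (hsa : s < a) (k : ℕ) :
    ∑ i ∈ range k, (a ^ (k - i))⁻¹ * s⁻¹ ^ (i + 1) ≤ s⁻¹ ^ k / (a - s) := by
  have ha : 0 < a := hs.trans hsa
  have has : 0 < a - s := sub_pos.2 hsa
  induction k with
  | zero => simpa using has.le
  | succ k ih =>
    have hrec : ∑ i ∈ range (k + 1), (a ^ (k + 1 - i))⁻¹ * s⁻¹ ^ (i + 1)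
        = a⁻¹ * (∑ i ∈ range k, (a ^ (k - i))⁻¹ * s⁻¹ ^ (i + 1) + s⁻¹ ^ (k + 1)) := by
      rw [sum_range_succ, mul_add, mul_sum, Nat.add_sub_cancel_left, pow_one]
      congr 1
      refine sum_congr rfl fun i hi => ?_
      rw [Nat.sub_add_comm (mem_range.1 hi).le, pow_succ, mul_inv]
      ring
    rw [hrec]
    calc _ ≤ a⁻¹ * (s⁻¹ ^ k / (a - s) + s⁻¹ ^ (k + 1)) :=
          mul_le_mul_of_nonneg_left (by linarith) (inv_nonneg.2 ha.le)
      _ = s⁻¹ ^ (k + 1) / (a - s) := by rw [pow_succ]; field_simp; ring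

theorem inv_exp_pow (γ : ℝ) (k : ℕ) : (Real.exp γ)⁻¹ ^ k = Real.exp (-γ * k) := by
  rw [← Real.exp_neg, ← Real.exp_nat_mul, mul_comm]

theorem exists_exp_bound {u : ℕ → E} {M γ ε : ℝ} (hu : ∀ k, ‖u k‖ ≤ M * (Real.exp γ)⁻¹ ^ k)
    (hε : 0 < ε) : ∃ C, ∀ k : ℕ, ‖u k‖ ≤ C * Real.exp ((-γ + ε) * k) := by
  have hM := nonneg_of_norm_le_mul_inv_pow hu
  refine ⟨M, fun k => (hu k).trans ?_⟩
  rw [inv_exp_pow]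
  gcongr
  linarith

theorem exists_inv_pow_bound {u : ℕ → E} {γ s : ℝ}
    (hu : ∀ ε : ℝ, 0 < ε → ∃ C : ℝ, ∀ k : ℕ, ‖u k‖ ≤ C * Real.exp ((-γ + ε) * k))
    (hs : 0 < s) (hsγ : s < Real.exp γ) : ∃ M, ∀ k, ‖u k‖ ≤ M * s⁻¹ ^ k := by
  obtain ⟨C, hC⟩ := hu (γ - Real.log s) (by linarith [(Real.log_lt_iff_lt_exp hs).2 hsγ])
  have hs_pow (k : ℕ) : s⁻¹ ^ k = Real.exp (-Real.log s * k) := by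
    rw [← inv_exp_pow, Real.exp_log hs]
  refine ⟨C, fun k => (hC k).trans_eq ?_⟩
  rw [hs_pow]
  ring_nf

theorem exists_lt_gap_lt_one {C₁ C₂ α₁ α₂ ℓ t : ℝ} (hα₂t : α₂ < t) (htα₁ : t < α₁)
    (ht : (C₁ / (α₁ - t) + C₂ / (t - α₂)) * ℓ < 1) :
    ∃ s, α₂ < s ∧ s < t ∧ (C₁ / (α₁ - s) + C₂ / (s - α₂)) * ℓ < 1 := by
  have hcont : ContinuousAt (fun s => (C₁ / (α₁ - s) + C₂ / (s - α₂)) * ℓ) t :=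
    ((continuousAt_const.div (continuousAt_const.sub continuousAt_id) (sub_pos.2 htα₁).ne').add
      (continuousAt_const.div (continuousAt_id.sub continuousAt_const)
        (sub_pos.2 hα₂t).ne')).mul continuousAt_const
  have hnear : ∀ᶠ s in 𝓝 t, α₂ < s ∧ (C₁ / (α₁ - s) + C₂ / (s - α₂)) * ℓ < 1 :=
    (eventually_gt_nhds hα₂t).and (hcont.eventually_lt continuousAt_const ht)
  obtain ⟨s, ⟨hα₂s, hs⟩, hst⟩ := ((hnear.filter_mono nhdsWithin_le_nhds).and
    (self_mem_nhdsWithin (s := Set.Iio t))).exists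
  exact ⟨s, hα₂s, hst, hs⟩

def IsNegSemiorbit {α : Type*} (F : α → α) (u : ℕ → α) : Prop :=
  ∀ k, F (u (k + 1)) = u k

theorem map_mem_of_isNegSemiorbit {F : E → E} {W : Set E} {s₁ s₂ : ℝ} (hs₂ : 0 < s₂)
    (hs₂₁ : s₂ ≤ s₁)
    (hstart : ∀ w ∈ W, ∃ (u : ℕ → E) (M : ℝ),
      u 0 = w ∧ IsNegSemiorbit F u ∧ ∀ k, ‖u k‖ ≤ M * s₁⁻¹ ^ k)
    (hmem : ∀ (u : ℕ → E) (M : ℝ), IsNegSemiorbit F u → (∀ k, ‖u k‖ ≤ M * s₂⁻¹ ^ k) → u 0 ∈ W)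
    {w : E} (hw : w ∈ W) : F w ∈ W := by
  obtain ⟨u, M, rfl, horb, hu⟩ := hstart w hw
  have hM := nonneg_of_norm_le_mul_inv_pow hu
  refine hmem (fun | 0 => F (u 0) | k + 1 => u k) (max ‖F (u 0)‖ (M * s₂)) ?_ ?_
  · rintro (_ | k)
    · rfl
    · exact horb k
  · rintro (_ | k)
    · simp
    · calc ‖u k‖ ≤ M * s₂⁻¹ ^ k := norm_le_mul_inv_pow_mono hs₂ hs₂₁ hu k
        _ = M * s₂ * s₂⁻¹ ^ (k + 1) := by rw [pow_succ]; field_simp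
        _ ≤ max ‖F (u 0)‖ (M * s₂) * s₂⁻¹ ^ (k + 1) := by gcongr; exact le_max_right _ _

theorem mem_of_isNegSemiorbit {F : E → E} {W : Set E} {s : ℝ}
    (hmem : ∀ (u : ℕ → E) (M : ℝ), IsNegSemiorbit F u → (∀ k, ‖u k‖ ≤ M * s⁻¹ ^ k) → u 0 ∈ W)
    {u : ℕ → E} {M : ℝ} (hu : IsNegSemiorbit F u) (hb : ∀ k, ‖u k‖ ≤ M * s⁻¹ ^ k) (k : ℕ) :
    u k ∈ W :=
  hmem (fun m => u (k + m)) (M * s⁻¹ ^ k) (fun m => hu (k + m))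
    fun m => (hb (k + m)).trans_eq (by rw [pow_add, mul_assoc])

end Sequences

variable {X : Type*} [NormedAddCommGroup X] [NormedSpace ℝ X]

theorem pow_succ_apply (T : X →L[ℝ] X) (m : ℕ) (x : X) : (T ^ (m + 1)) x = T ((T ^ m) x) := by
  rw [pow_succ']; rfl

theorem pow_succ_apply' (T : X →L[ℝ] X) (m : ℕ) (x : X) : (T ^ (m + 1)) x = (T ^ m) (T x) := by
  rw [pow_succ]; rfl

theorem norm_smul_pow_le_iff {s M : ℝ} (hs : 0 < s) (k : ℕ) (x : X) :
    ‖s ^ k • x‖ ≤ M ↔ ‖x‖ ≤ M * s⁻¹ ^ k := by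
  rw [norm_smul, norm_pow, Real.norm_of_nonneg hs.le, inv_pow, ← div_eq_mul_inv,
    le_div_iff₀ (pow_pos hs k), mul_comm]

def graph (P₁ : X →L[ℝ] X) (φ : X → X) : Set X :=
  {w | ∃ v ∈ Set.range ⇑P₁, w = v + φ v}

structure Dichotomy (P₁ P₂ L L' : X →L[ℝ] X) (C₁ C₂ α₁ α₂ : ℝ) : Prop where
  add_apply : ∀ x, P₁ x + P₂ x = x
  proj₁_idem : ∀ x, P₁ (P₁ x) = P₁ x
  proj₁_proj₂ : ∀ x, P₁ (P₂ x) = 0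
  comm : ∀ x, L (P₁ x) = P₁ (L x)
  inv_apply_apply : ∀ x, L' (L (P₁ x)) = P₁ x
  apply_inv_apply : ∀ x, L (L' (P₁ x)) = P₁ x
  proj₁_inv : ∀ x, P₁ (L' (P₁ x)) = L' (P₁ x)
  C₁_nonneg : 0 ≤ C₁
  C₂_nonneg : 0 ≤ C₂
  α₂_nonneg : 0 ≤ α₂
  norm_inv_pow_le : ∀ (j : ℕ) x, ‖(L' ^ j) (P₁ x)‖ ≤ C₁ * (α₁ ^ j)⁻¹ * ‖x‖
  norm_pow_le : ∀ (j : ℕ) x, ‖(L ^ j) (P₂ x)‖ ≤ C₂ * α₂ ^ j * ‖x‖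

theorem Dichotomy.of_comp {P₁ P₂ L L' : X →L[ℝ] X} {C₁ C₂ α₁ α₂ : ℝ}
    (hsum : P₁ + P₂ = ContinuousLinearMap.id ℝ X) (hP₁ : P₁.comp P₁ = P₁)
    (hP₁₂ : P₁.comp P₂ = 0) (hcomm : L.comp P₁ = P₁.comp L) (hL'₁ : (L'.comp L).comp P₁ = P₁)
    (hL'₂ : (L.comp L').comp P₁ = P₁) (hL'₃ : (P₁.comp L').comp P₁ = L'.comp P₁)
    (hC₁ : 0 ≤ C₁) (hC₂ : 0 ≤ C₂) (hα₂ : 0 ≤ α₂)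
    (hdich₁ : ∀ j : ℕ, ‖(L' ^ j).comp P₁‖ ≤ C₁ * (α₁ ^ j)⁻¹)
    (hdich₂ : ∀ j : ℕ, ‖(L ^ j).comp P₂‖ ≤ C₂ * α₂ ^ j) :
    Dichotomy P₁ P₂ L L' C₁ C₂ α₁ α₂ where
  add_apply := DFunLike.congr_fun hsum
  proj₁_idem := DFunLike.congr_fun hP₁
  proj₁_proj₂ := DFunLike.congr_fun hP₁₂
  comm := DFunLike.congr_fun hcomm
  inv_apply_apply := DFunLike.congr_fun hL'₁
  apply_inv_apply := DFunLike.congr_fun hL'₂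
  proj₁_inv := DFunLike.congr_fun hL'₃
  C₁_nonneg := hC₁
  C₂_nonneg := hC₂
  α₂_nonneg := hα₂
  norm_inv_pow_le j := ((L' ^ j).comp P₁).le_of_opNorm_le (hdich₁ j)
  norm_pow_le j := ((L ^ j).comp P₂).le_of_opNorm_le (hdich₂ j)

/-- The Lyapunov–Perron (variation of constants) formula: for `w` decaying like `s⁻ᵏ` with
`α₂ < s < α₁`, it is the solution of `u k = L (u (k + 1)) + w (k + 1)` decaying at that rate with
`P₁ (u 0) = P₁ ξ`. For other `w` the series may diverge, and `tsum` then gives `0`. -/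
noncomputable def lyapunovPerron (P₁ P₂ L L' : X →L[ℝ] X) (ξ : X) (w : ℕ → X) (k : ℕ) : X :=
  (L' ^ k) (P₁ ξ) - ∑ i ∈ range k, (L' ^ (k - i)) (P₁ (w (i + 1)))
    + ∑' j, (L ^ j) (P₂ (w (k + 1 + j)))

theorem lyapunovPerron_sub {P₁ P₂ L L' : X →L[ℝ] X} (ξ η : X) {w w' : ℕ → X} {k : ℕ}
    (hw : Summable fun j => (L ^ j) (P₂ (w (k + 1 + j))))
    (hw' : Summable fun j => (L ^ j) (P₂ (w' (k + 1 + j)))) :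
    lyapunovPerron P₁ P₂ L L' ξ w k - lyapunovPerron P₁ P₂ L L' η w' k
      = lyapunovPerron P₁ P₂ L L' (ξ - η) (w - w') k := by
  simp only [lyapunovPerron, Pi.sub_apply, map_sub, sum_sub_distrib, hw.tsum_sub hw']
  abel

namespace Dichotomy

variable {P₁ P₂ L L' : X →L[ℝ] X} {C₁ C₂ α₁ α₂ s c : ℝ} {w : ℕ → X}
  (hD : Dichotomy P₁ P₂ L L' C₁ C₂ α₁ α₂)
include hD

theorem proj₁_eq_self {v : X} (hv : v ∈ Set.range P₁) : P₁ v = v := by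
  obtain ⟨x, rfl⟩ := hv
  exact hD.proj₁_idem x

theorem comm₂ (x : X) : L (P₂ x) = P₂ (L x) := by
  have h : P₁ (L x) + L (P₂ x) = L x := by rw [← hD.comm, ← map_add, hD.add_apply]
  exact add_left_cancel (h.trans (hD.add_apply (L x)).symm)

theorem proj₁_pow_proj₂ (j : ℕ) (x : X) : P₁ ((L ^ j) (P₂ x)) = 0 := by
  induction j with
  | zero => simpa using hD.proj₁_proj₂ x
  | succ j ih => rw [pow_succ_apply, ← hD.comm, ih, map_zero]

theorem proj₁_inv_pow (m : ℕ) (x : X) : P₁ ((L' ^ m) (P₁ x)) = (L' ^ m) (P₁ x) := by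
  induction m with
  | zero => simpa using hD.proj₁_idem x
  | succ m ih => rw [pow_succ_apply, ← ih, hD.proj₁_inv, ih]

theorem apply_inv_pow_succ (m : ℕ) (x : X) : L ((L' ^ (m + 1)) (P₁ x)) = (L' ^ m) (P₁ x) := by
  rw [pow_succ_apply, ← hD.proj₁_inv_pow, hD.apply_inv_apply, hD.proj₁_inv_pow]

theorem gap_nonneg (hsα₂ : α₂ < s) (hsα₁ : s < α₁) (K : ℝ≥0) :
    0 ≤ (C₁ / (α₁ - s) + C₂ / (s - α₂)) * K :=
  mul_nonneg (add_nonneg (div_nonneg hD.C₁_nonneg (sub_pos.2 hsα₁).le)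
    (div_nonneg hD.C₂_nonneg (sub_pos.2 hsα₂).le)) K.2

theorem norm_pow_proj₂_le (hw : ∀ m, ‖w m‖ ≤ c * s⁻¹ ^ m) (n j : ℕ) :
    ‖(L ^ j) (P₂ (w (n + j)))‖ ≤ C₂ * c * s⁻¹ ^ n * (α₂ / s) ^ j := by
  have := hD.C₂_nonneg
  have := hD.α₂_nonneg
  calc _ ≤ C₂ * α₂ ^ j * (c * s⁻¹ ^ (n + j)) :=
        (hD.norm_pow_le j _).trans (mul_le_mul_of_nonneg_left (hw _) (by positivity))
    _ = _ := by rw [pow_add, div_eq_mul_inv, mul_pow]; ring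

theorem norm_sum_head_le (hs0 : 0 < s) (hsα₁ : s < α₁) (hw : ∀ m, ‖w m‖ ≤ c * s⁻¹ ^ m)
    (k : ℕ) :
    ‖∑ i ∈ range k, (L' ^ (k - i)) (P₁ (w (i + 1)))‖ ≤ C₁ * c / (α₁ - s) * s⁻¹ ^ k := by
  have := hD.C₁_nonneg
  have hc := nonneg_of_norm_le_mul_inv_pow hw
  have hα₁ : 0 < α₁ := hs0.trans hsα₁
  calc _ ≤ ∑ i ∈ range k, C₁ * c * ((α₁ ^ (k - i))⁻¹ * s⁻¹ ^ (i + 1)) := by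
        refine (norm_sum_le _ _).trans (sum_le_sum fun i _ => ?_)
        calc _ ≤ C₁ * (α₁ ^ (k - i))⁻¹ * (c * s⁻¹ ^ (i + 1)) :=
              (hD.norm_inv_pow_le _ _).trans (mul_le_mul_of_nonneg_left (hw _) (by positivity))
          _ = _ := by ring
    _ = C₁ * c * ∑ i ∈ range k, (α₁ ^ (k - i))⁻¹ * s⁻¹ ^ (i + 1) := by rw [mul_sum]
    _ ≤ C₁ * c * (s⁻¹ ^ k / (α₁ - s)) :=
        mul_le_mul_of_nonneg_left (sum_range_inv_pow_mul_inv_pow_le hs0 hsα₁ k) (by positivity)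
    _ = _ := by ring

theorem proj₁_eq_of_orbit {u : ℕ → X} (horb : ∀ k, L (u (k + 1)) + w (k + 1) = u k) (k : ℕ) :
    P₁ (u k) = (L' ^ k) (P₁ (u 0)) - ∑ i ∈ range k, (L' ^ (k - i)) (P₁ (w (i + 1))) := by
  induction k with
  | zero => simp
  | succ k ih =>
    have hrec : P₁ (u (k + 1)) = L' (P₁ (u k)) - L' (P₁ (w (k + 1))) := by
      rw [← horb k, map_add, map_add, ← hD.comm, hD.inv_apply_apply, add_sub_cancel_right]
    rw [hrec, ih, map_sub, map_sum, sum_range_succ, ← pow_succ_apply, Nat.add_sub_cancel_left,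
      pow_one, sub_sub]
    congr 2
    refine sum_congr rfl fun i hi => ?_
    rw [Nat.sub_add_comm (mem_range.1 hi).le, pow_succ_apply]

theorem hasSum_geometric (hs : α₂ < s) : HasSum (fun j => (α₂ / s) ^ j) (1 - α₂ / s)⁻¹ :=
  have hs0 : 0 < s := hD.α₂_nonneg.trans_lt hs
  hasSum_geometric_of_lt_one (div_nonneg hD.α₂_nonneg hs0.le) ((div_lt_one hs0).2 hs)

theorem norm_tsum_tail_le (hs : α₂ < s) (hw : ∀ m, ‖w m‖ ≤ c * s⁻¹ ^ m) (k : ℕ) :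
    ‖∑' j, (L ^ j) (P₂ (w (k + 1 + j)))‖ ≤ C₂ * c / (s - α₂) * s⁻¹ ^ k := by
  have hs0 : 0 < s := hD.α₂_nonneg.trans_lt hs
  have hsα₂ : 0 < s - α₂ := sub_pos.2 hs
  calc _ ≤ C₂ * c * s⁻¹ ^ (k + 1) * (1 - α₂ / s)⁻¹ :=
        tsum_of_norm_bounded ((hD.hasSum_geometric hs).mul_left _) (hD.norm_pow_proj₂_le hw (k + 1))
    _ = _ := by rw [pow_succ]; field_simp

theorem norm_lyapunovPerron_le (hsα₂ : α₂ < s) (hsα₁ : s < α₁)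
    (hw : ∀ m, ‖w m‖ ≤ c * s⁻¹ ^ m) (ξ : X) (k : ℕ) :
    ‖lyapunovPerron P₁ P₂ L L' ξ w k‖
      ≤ (C₁ * ‖P₁ ξ‖ + (C₁ / (α₁ - s) + C₂ / (s - α₂)) * c) * s⁻¹ ^ k := by
  have hs0 : 0 < s := hD.α₂_nonneg.trans_lt hsα₂
  have := hD.C₁_nonneg
  have hfree : ‖(L' ^ k) (P₁ ξ)‖ ≤ C₁ * ‖P₁ ξ‖ * s⁻¹ ^ k :=
    calc ‖(L' ^ k) (P₁ ξ)‖ = ‖(L' ^ k) (P₁ (P₁ ξ))‖ := by rw [hD.proj₁_idem]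
      _ ≤ C₁ * (α₁ ^ k)⁻¹ * ‖P₁ ξ‖ := hD.norm_inv_pow_le k _
      _ ≤ C₁ * (s ^ k)⁻¹ * ‖P₁ ξ‖ := by gcongr
      _ = C₁ * ‖P₁ ξ‖ * s⁻¹ ^ k := by rw [inv_pow]; ring
  have hhead := hD.norm_sum_head_le hs0 hsα₁ hw k
  have htail := hD.norm_tsum_tail_le hsα₂ hw k
  calc _ ≤ ‖(L' ^ k) (P₁ ξ)‖ + ‖∑ i ∈ range k, (L' ^ (k - i)) (P₁ (w (i + 1)))‖
        + ‖∑' j, (L ^ j) (P₂ (w (k + 1 + j)))‖ :=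
        (norm_add_le _ _).trans (add_le_add_left (norm_sub_le _ _) _)
    _ ≤ C₁ * ‖P₁ ξ‖ * s⁻¹ ^ k + C₁ * c / (α₁ - s) * s⁻¹ ^ k + C₂ * c / (s - α₂) * s⁻¹ ^ k := by
        linarith
    _ = _ := by ring

variable [CompleteSpace X]

theorem summable_tail (hs : α₂ < s) (hw : ∀ m, ‖w m‖ ≤ c * s⁻¹ ^ m) (k : ℕ) :
    Summable fun j => (L ^ j) (P₂ (w (k + 1 + j))) :=
  ((hD.hasSum_geometric hs).mul_left _).summable.of_norm_bounded (hD.norm_pow_proj₂_le hw (k + 1))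

theorem proj₁_lyapunovPerron_zero (hs : α₂ < s) (hw : ∀ m, ‖w m‖ ≤ c * s⁻¹ ^ m) (ξ : X) :
    P₁ (lyapunovPerron P₁ P₂ L L' ξ w 0) = P₁ ξ := by
  simp only [lyapunovPerron, pow_zero, one_apply_eq_self, range_zero, sum_empty,
    sub_zero, map_add, hD.proj₁_idem, P₁.map_tsum (hD.summable_tail hs hw 0),
    hD.proj₁_pow_proj₂, tsum_zero, add_zero]

theorem apply_lyapunovPerron_succ (hs : α₂ < s) (hw : ∀ m, ‖w m‖ ≤ c * s⁻¹ ^ m) (ξ : X)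
    (k : ℕ) :
    L (lyapunovPerron P₁ P₂ L L' ξ w (k + 1)) + w (k + 1) = lyapunovPerron P₁ P₂ L L' ξ w k := by
  have hhead : L (∑ i ∈ range (k + 1), (L' ^ (k + 1 - i)) (P₁ (w (i + 1))))
      = ∑ i ∈ range k, (L' ^ (k - i)) (P₁ (w (i + 1))) + P₁ (w (k + 1)) := by
    rw [map_sum, sum_range_succ, Nat.add_sub_cancel_left]
    congr 1
    · refine sum_congr rfl fun i hi => ?_
      rw [Nat.sub_add_comm (mem_range.1 hi).le, hD.apply_inv_pow_succ]
    · simpa using hD.apply_inv_pow_succ 0 (w (k + 1))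
  have htail : L (∑' j, (L ^ j) (P₂ (w (k + 1 + 1 + j))))
      = ∑' j, (L ^ (j + 1)) (P₂ (w (k + 1 + (j + 1)))) := by
    rw [L.map_tsum (hD.summable_tail hs hw (k + 1))]
    refine tsum_congr fun j => ?_
    rw [pow_succ_apply, show k + 1 + 1 + j = k + 1 + (j + 1) by omega]
  rw [lyapunovPerron, lyapunovPerron, map_add, map_sub, hD.apply_inv_pow_succ, hhead, htail,
    (hD.summable_tail hs hw k).tsum_eq_zero_add]
  simp only [pow_zero, one_apply_eq_self, add_zero]
  have hsplit := hD.add_apply (w (k + 1))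
  linear_combination (norm := skip) -hsplit
  abel

theorem proj₂_eq_tsum_of_orbit {u : ℕ → X} {M : ℝ} (hs : α₂ < s)
    (hu : ∀ m, ‖u m‖ ≤ M * s⁻¹ ^ m) (hw : ∀ m, ‖w m‖ ≤ c * s⁻¹ ^ m)
    (horb : ∀ k, L (u (k + 1)) + w (k + 1) = u k) (k : ℕ) :
    P₂ (u k) = ∑' j, (L ^ j) (P₂ (w (k + 1 + j))) := by
  have htel : ∀ m, P₂ (u k)
      = (L ^ m) (P₂ (u (k + m))) + ∑ j ∈ range m, (L ^ j) (P₂ (w (k + 1 + j))) := by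
    intro m
    induction m with
    | zero => simp
    | succ m ih =>
      rw [ih, ← horb (k + m), map_add, map_add, ← hD.comm₂, ← pow_succ_apply', sum_range_succ,
        show k + m + 1 = k + (m + 1) by omega, show k + (m + 1) = k + 1 + m by omega]
      abel
  have hrest : Tendsto (fun m => (L ^ m) (P₂ (u (k + m)))) atTop (𝓝 0) :=
    squeeze_zero_norm (hD.norm_pow_proj₂_le hu k) (by
      simpa using
        ((hD.hasSum_geometric hs).mul_left (C₂ * M * s⁻¹ ^ k)).summable.tendsto_atTop_zero)
  have hpartial : Tendsto (fun m => ∑ j ∈ range m, (L ^ j) (P₂ (w (k + 1 + j)))) atTop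
      (𝓝 (P₂ (u k))) := by
    have := (tendsto_const_nhds (x := P₂ (u k))).sub hrest
    rw [sub_zero] at this
    exact this.congr fun m => by rw [htel m, add_sub_cancel_left]
  exact tendsto_nhds_unique hpartial (hD.summable_tail hs hw k).hasSum.tendsto_sum_nat

theorem lyapunovPerron_eq_of_orbit {u : ℕ → X} {M : ℝ} (hs : α₂ < s)
    (hu : ∀ m, ‖u m‖ ≤ M * s⁻¹ ^ m) (hw : ∀ m, ‖w m‖ ≤ c * s⁻¹ ^ m)
    (horb : ∀ k, L (u (k + 1)) + w (k + 1) = u k) (k : ℕ) :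
    lyapunovPerron P₁ P₂ L L' (u 0) w k = u k := by
  rw [lyapunovPerron, ← hD.proj₁_eq_of_orbit horb, ← hD.proj₂_eq_tsum_of_orbit hs hu hw horb,
    hD.add_apply]

variable {N : X → X} {K : ℝ≥0}

theorem norm_lyapunovPerron_sub_le (hN : LipschitzWith K N) (hN0 : N 0 = 0)
    (hsα₂ : α₂ < s) (hsα₁ : s < α₁) {u v : ℕ → X} {Mu Mv M : ℝ}
    (hu : ∀ m, ‖u m‖ ≤ Mu * s⁻¹ ^ m) (hv : ∀ m, ‖v m‖ ≤ Mv * s⁻¹ ^ m)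
    (huv : ∀ m, ‖u m - v m‖ ≤ M * s⁻¹ ^ m) (ξ η : X) (k : ℕ) :
    ‖lyapunovPerron P₁ P₂ L L' ξ (N ∘ u) k - lyapunovPerron P₁ P₂ L L' η (N ∘ v) k‖
      ≤ (C₁ * ‖P₁ ξ - P₁ η‖ + (C₁ / (α₁ - s) + C₂ / (s - α₂)) * K * M) * s⁻¹ ^ k := by
  rw [lyapunovPerron_sub _ _ (hD.summable_tail (w := N ∘ u) hsα₂ (norm_map_le hN hN0 hu) k)
    (hD.summable_tail (w := N ∘ v) hsα₂ (norm_map_le hN hN0 hv) k), mul_assoc _ (K : ℝ),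
    ← map_sub]
  exact hD.norm_lyapunovPerron_le (w := N ∘ u - N ∘ v) hsα₂ hsα₁ (norm_map_sub_map_le hN huv)
    (ξ - η) k

theorem exists_fixedPoint (hN : LipschitzWith K N) (hN0 : N 0 = 0) (hsα₂ : α₂ < s)
    (hsα₁ : s < α₁) (hκ : (C₁ / (α₁ - s) + C₂ / (s - α₂)) * K < 1) (ξ : X) :
    ∃ (u : ℕ → X) (M : ℝ),
      (∀ k, lyapunovPerron P₁ P₂ L L' ξ (N ∘ u) k = u k) ∧ ∀ k, ‖u k‖ ≤ M * s⁻¹ ^ k := by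
  have hs0 : 0 < s := hD.α₂_nonneg.trans_lt hsα₂
  set κ := (C₁ / (α₁ - s) + C₂ / (s - α₂)) * K
  have hκ0 : 0 ≤ κ := hD.gap_nonneg hsα₂ hsα₁ K
  -- bounded sequences `w` stand for the sequences `k ↦ s⁻¹ ^ k • w k` of rate `s`
  let unweight (w : ℕ →ᵇ X) (m : ℕ) : X := s⁻¹ ^ m • w m
  have hdist (w w' : ℕ →ᵇ X) (m : ℕ) : ‖unweight w m - unweight w' m‖ ≤ dist w w' * s⁻¹ ^ m := by
    rw [← smul_sub, norm_smul, norm_pow, Real.norm_of_nonneg (inv_nonneg.2 hs0.le), mul_comm,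
      ← dist_eq_norm]
    gcongr
    exact BoundedContinuousFunction.dist_coe_le_dist m
  have hnorm (w : ℕ →ᵇ X) (m : ℕ) : ‖unweight w m‖ ≤ ‖w‖ * s⁻¹ ^ m := by
    simpa [unweight] using hdist w 0 m
  let T (w : ℕ →ᵇ X) : ℕ →ᵇ X :=
    .ofNormedAddCommGroupDiscrete (fun k => s ^ k • lyapunovPerron P₁ P₂ L L' ξ (N ∘ unweight w) k)
      _ fun k => (norm_smul_pow_le_iff hs0 k _).2
        (hD.norm_lyapunovPerron_le hsα₂ hsα₁ (norm_map_le hN hN0 (hnorm w)) ξ k)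
  have hT : ContractingWith (Real.toNNReal κ) T := by
    refine ⟨Real.toNNReal_lt_one.2 hκ, .of_dist_le_mul fun w w' => ?_⟩
    rw [Real.coe_toNNReal _ hκ0]
    refine (BoundedContinuousFunction.dist_le (by positivity)).2 fun k => ?_
    rw [dist_eq_norm]
    simp only [T, BoundedContinuousFunction.coe_ofNormedAddCommGroupDiscrete, ← smul_sub]
    refine (norm_smul_pow_le_iff hs0 k _).2 ?_
    simpa using
      hD.norm_lyapunovPerron_sub_le hN hN0 hsα₂ hsα₁ (hnorm w) (hnorm w') (hdist w w') ξ ξ k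
  set w := ContractingWith.fixedPoint T hT
  refine ⟨unweight w, ‖w‖, fun k => ?_, hnorm w⟩
  have hfix : s ^ k • lyapunovPerron P₁ P₂ L L' ξ (N ∘ unweight w) k = w k :=
    DFunLike.congr_fun hT.fixedPoint_isFixedPt k
  show _ = s⁻¹ ^ k • w k
  rw [← hfix, smul_smul, ← mul_pow, inv_mul_cancel₀ hs0.ne', one_pow, one_smul]

theorem norm_sub_le_of_fixed (hN : LipschitzWith K N) (hN0 : N 0 = 0) (hsα₂ : α₂ < s)
    (hsα₁ : s < α₁) (hκ : (C₁ / (α₁ - s) + C₂ / (s - α₂)) * K < 1) {ξ η : X} {u v : ℕ → X}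
    {Mu Mv : ℝ} (hu : ∀ m, ‖u m‖ ≤ Mu * s⁻¹ ^ m) (hv : ∀ m, ‖v m‖ ≤ Mv * s⁻¹ ^ m)
    (hfu : ∀ k, lyapunovPerron P₁ P₂ L L' ξ (N ∘ u) k = u k)
    (hfv : ∀ k, lyapunovPerron P₁ P₂ L L' η (N ∘ v) k = v k) (k : ℕ) :
    ‖u k - v k‖ ≤ C₁ * ‖P₁ ξ - P₁ η‖ / (1 - (C₁ / (α₁ - s) + C₂ / (s - α₂)) * K) * s⁻¹ ^ k := by
  have hs0 : 0 < s := hD.α₂_nonneg.trans_lt hsα₂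
  set κ := (C₁ / (α₁ - s) + C₂ / (s - α₂)) * K
  have hκ0 : 0 ≤ κ := hD.gap_nonneg hsα₂ hsα₁ K
  have := hD.C₁_nonneg
  let δ : ℕ →ᵇ X := .ofNormedAddCommGroupDiscrete (fun k => s ^ k • (u k - v k)) (Mu + Mv)
    fun k => (norm_smul_pow_le_iff hs0 k _).2
      ((norm_sub_le _ _).trans (by rw [add_mul]; exact add_le_add (hu k) (hv k)))
  have hδ (k : ℕ) : ‖u k - v k‖ ≤ ‖δ‖ * s⁻¹ ^ k :=
    (norm_smul_pow_le_iff hs0 k _).1 (δ.norm_coe_le_norm k)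
  have hself : ‖δ‖ ≤ C₁ * ‖P₁ ξ - P₁ η‖ + κ * ‖δ‖ :=
    (BoundedContinuousFunction.norm_le (by positivity)).2 fun k =>
      (norm_smul_pow_le_iff hs0 k _).2 (by
        rw [← hfu k, ← hfv k]
        exact hD.norm_lyapunovPerron_sub_le hN hN0 hsα₂ hsα₁ hu hv hδ ξ η k)
  have hδle : ‖δ‖ ≤ C₁ * ‖P₁ ξ - P₁ η‖ / (1 - κ) := by
    rw [le_div_iff₀ (by linarith)]
    linarith
  exact (hδ k).trans (by gcongr)

theorem eq_of_fixed (hN : LipschitzWith K N) (hN0 : N 0 = 0) (hsα₂ : α₂ < s)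
    (hsα₁ : s < α₁) (hκ : (C₁ / (α₁ - s) + C₂ / (s - α₂)) * K < 1) {ξ η : X} {u v : ℕ → X}
    {Mu Mv : ℝ} (hu : ∀ m, ‖u m‖ ≤ Mu * s⁻¹ ^ m) (hv : ∀ m, ‖v m‖ ≤ Mv * s⁻¹ ^ m)
    (hfu : ∀ k, lyapunovPerron P₁ P₂ L L' ξ (N ∘ u) k = u k)
    (hfv : ∀ k, lyapunovPerron P₁ P₂ L L' η (N ∘ v) k = v k) (hξη : P₁ ξ = P₁ η) : u = v :=
  funext fun k => sub_eq_zero.1 <| norm_le_zero_iff.1 <| by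
    simpa [hξη] using hD.norm_sub_le_of_fixed hN hN0 hsα₂ hsα₁ hκ hu hv hfu hfv k

theorem isNegSemiorbit_of_fixed (hN : LipschitzWith K N) (hN0 : N 0 = 0) (hs : α₂ < s)
    {ξ : X} {u : ℕ → X} {M : ℝ} (hu : ∀ k, ‖u k‖ ≤ M * s⁻¹ ^ k)
    (hfix : ∀ k, lyapunovPerron P₁ P₂ L L' ξ (N ∘ u) k = u k) :
    IsNegSemiorbit (fun x => L x + N x) u := fun k => by
  have h := hD.apply_lyapunovPerron_succ (w := N ∘ u) hs (norm_map_le hN hN0 hu) ξ k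
  rw [hfix, hfix] at h
  exact h

theorem apply_zero_of_fixed (hN : LipschitzWith K N) (hN0 : N 0 = 0) (hs : α₂ < s)
    {ξ : X} {u : ℕ → X} {M : ℝ} (hu : ∀ k, ‖u k‖ ≤ M * s⁻¹ ^ k)
    (hfix : ∀ k, lyapunovPerron P₁ P₂ L L' ξ (N ∘ u) k = u k) : u 0 = P₁ ξ + P₂ (u 0) := by
  have hP₁u : P₁ (u 0) = P₁ ξ := by
    conv_lhs => rw [← hfix 0]
    exact hD.proj₁_lyapunovPerron_zero (w := N ∘ u) hs (norm_map_le hN hN0 hu) ξ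
  rw [← hP₁u, hD.add_apply]

theorem exists_graph (hN : LipschitzWith K N) (hN0 : N 0 = 0) {s₁ s₂ : ℝ} (hα₂s₂ : α₂ < s₂)
    (hs₂₁ : s₂ ≤ s₁) (hs₁α₁ : s₁ < α₁) (hκ₁ : (C₁ / (α₁ - s₁) + C₂ / (s₁ - α₂)) * K < 1)
    (hκ₂ : (C₁ / (α₁ - s₂) + C₂ / (s₂ - α₂)) * K < 1) :
    ∃ φ : X → X,
      (∃ K' : ℝ, ∀ u ∈ Set.range ⇑P₁, ∀ v ∈ Set.range ⇑P₁, ‖φ u - φ v‖ ≤ K' * ‖u - v‖) ∧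
      φ 0 = 0 ∧ (∀ v ∈ Set.range ⇑P₁, φ v ∈ Set.range ⇑P₂) ∧
      (∀ w ∈ graph P₁ φ, ∃ (u : ℕ → X) (M : ℝ),
        u 0 = w ∧ IsNegSemiorbit (fun x => L x + N x) u ∧ ∀ k, ‖u k‖ ≤ M * s₁⁻¹ ^ k) ∧
      ∀ (u : ℕ → X) (M : ℝ), IsNegSemiorbit (fun x => L x + N x) u →
        (∀ k, ‖u k‖ ≤ M * s₂⁻¹ ^ k) → u 0 ∈ graph P₁ φ := by
  have hα₂s₁ := hα₂s₂.trans_le hs₂₁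
  have hs₂α₁ := hs₂₁.trans_lt hs₁α₁
  have hs₂0 : 0 < s₂ := hD.α₂_nonneg.trans_lt hα₂s₂
  choose U M hUfix hUb using hD.exists_fixedPoint hN hN0 hα₂s₁ hs₁α₁ hκ₁
  have hU0 (ξ : X) := hD.apply_zero_of_fixed hN hN0 hα₂s₁ (hUb ξ) (hUfix ξ)
  have hmem (u : ℕ → X) (Mu : ℝ) (horb : IsNegSemiorbit (fun x => L x + N x) u)
      (hu : ∀ k, ‖u k‖ ≤ Mu * s₂⁻¹ ^ k) : u = U (P₁ (u 0)) :=
    hD.eq_of_fixed hN hN0 hα₂s₂ hs₂α₁ hκ₂ hu (norm_le_mul_inv_pow_mono hs₂0 hs₂₁ (hUb _))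
      (hD.lyapunovPerron_eq_of_orbit (w := N ∘ u) hα₂s₂ hu (norm_map_le hN hN0 hu) horb)
      (hUfix _) (hD.proj₁_idem _).symm
  refine ⟨fun ξ => P₂ (U ξ 0), ⟨‖P₂‖ * (C₁ / (1 - (C₁ / (α₁ - s₁) + C₂ / (s₁ - α₂)) * K)),
    fun u hu v hv => ?_⟩, ?_, fun ξ _ => ⟨_, rfl⟩, ?_, fun u Mu horb hu => ?_⟩
  · have huv := hD.norm_sub_le_of_fixed hN hN0 hα₂s₁ hs₁α₁ hκ₁ (hUb u) (hUb v) (hUfix u)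
      (hUfix v) 0
    rw [hD.proj₁_eq_self hu, hD.proj₁_eq_self hv, pow_zero, mul_one] at huv
    calc ‖P₂ (U u 0) - P₂ (U v 0)‖ ≤ ‖P₂‖ * ‖U u 0 - U v 0‖ := by
          rw [← map_sub]; exact P₂.le_opNorm _
      _ ≤ _ := by
          rw [mul_assoc]
          exact mul_le_mul_of_nonneg_left (huv.trans_eq (by ring)) (norm_nonneg _)
  · have hzero : U 0 = fun _ => 0 := hD.eq_of_fixed hN hN0 hα₂s₁ hs₁α₁ hκ₁ (hUb 0) (Mv := 0)
      (by simp) (hUfix 0) (by simp [lyapunovPerron, hN0]) rfl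
    simp [hzero]
  · rintro w ⟨v, hv, rfl⟩
    exact ⟨U v, M v, by rw [hU0, hD.proj₁_eq_self hv],
      hD.isNegSemiorbit_of_fixed hN hN0 hα₂s₁ (hUb v) (hUfix v), hUb v⟩
  · refine ⟨P₁ (u 0), ⟨_, rfl⟩, ?_⟩
    have h := congr_fun (hmem u Mu horb hu) 0
    rwa [hU0, hD.proj₁_idem] at h

end Dichotomy

end ChenHaleTan

theorem chen_hale_tan_graph_general {X : Type*} [NormedAddCommGroup X] [NormedSpace ℝ X]
    [CompleteSpace X]
    (P₁ P₂ : X →L[ℝ] X)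
    (hsum : P₁ + P₂ = ContinuousLinearMap.id ℝ X)
    (hP₁ : P₁.comp P₁ = P₁)
    (hP₁₂ : P₁.comp P₂ = 0)
    (L L' : X →L[ℝ] X)
    (hcomm : L.comp P₁ = P₁.comp L)
    (hL'₁ : (L'.comp L).comp P₁ = P₁)
    (hL'₂ : (L.comp L').comp P₁ = P₁)
    (hL'₃ : (P₁.comp L').comp P₁ = L'.comp P₁)
    (C₁ C₂ α₁ α₂ : ℝ) (hC₁ : 1 ≤ C₁) (hC₂ : 1 ≤ C₂)
    (hα₂ : 0 ≤ α₂)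
    (hdich₁ : ∀ j : ℕ, ‖(L' ^ j).comp P₁‖ ≤ C₁ * (α₁ ^ j)⁻¹)
    (hdich₂ : ∀ j : ℕ, ‖(L ^ j).comp P₂‖ ≤ C₂ * α₂ ^ j)
    (N : X → X) (ℓ : ℝ) (hℓ : 0 ≤ ℓ)
    (hN : ∀ u v : X, ‖N u - N v‖ ≤ ℓ * ‖u - v‖) (hN0 : N 0 = 0)
    (γ₁ γ₂ : ℝ) (hγ : γ₂ ≤ γ₁)
    (hγ₂ : α₂ < Real.exp γ₂) (hγ₁ : Real.exp γ₁ < α₁)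
    (hgap : ∀ s ∈ Set.Icc (Real.exp γ₂) (Real.exp γ₁),
      (C₁ / (α₁ - s) + C₂ / (s - α₂)) * ℓ < 1) :
    ∃ φ : X → X,
      (∃ K : ℝ, ∀ u ∈ Set.range ⇑P₁, ∀ v ∈ Set.range ⇑P₁,
        ‖φ u - φ v‖ ≤ K * ‖u - v‖) ∧
      φ 0 = 0 ∧
      (∀ v ∈ Set.range ⇑P₁, φ v ∈ Set.range ⇑P₂) ∧
      (∀ w ∈ {w : X | ∃ v ∈ Set.range ⇑P₁, w = v + φ v},
        L w + N w ∈ {w : X | ∃ v ∈ Set.range ⇑P₁, w = v + φ v}) ∧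
      (∀ u ∈ {w : X | ∃ v ∈ Set.range ⇑P₁, w = v + φ v},
        ∃ uk : ℕ → X, uk 0 = u ∧
          (∀ k, uk k ∈ {w : X | ∃ v ∈ Set.range ⇑P₁, w = v + φ v}) ∧
          (∀ k, L (uk (k + 1)) + N (uk (k + 1)) = uk k) ∧
          (∀ ε : ℝ, 0 < ε → ∃ Cb : ℝ, ∀ k : ℕ,
            ‖uk k‖ ≤ Cb * Real.exp ((-γ₁ + ε) * (k : ℝ)))) ∧
      (∀ uk : ℕ → X,
        (∀ k, L (uk (k + 1)) + N (uk (k + 1)) = uk k) →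
        (∀ ε : ℝ, 0 < ε → ∃ Cb : ℝ, ∀ k : ℕ,
          ‖uk k‖ ≤ Cb * Real.exp ((-γ₂ + ε) * (k : ℝ))) →
        ∀ k, uk k ∈ {w : X | ∃ v ∈ Set.range ⇑P₁, w = v + φ v}) := by
  have hD := ChenHaleTan.Dichotomy.of_comp hsum hP₁ hP₁₂ hcomm hL'₁ hL'₂ hL'₃
    (zero_le_one.trans hC₁) (zero_le_one.trans hC₂) hα₂ hdich₁ hdich₂
  have hNlip : LipschitzWith ⟨ℓ, hℓ⟩ N :=
    .of_dist_le_mul fun u v => by rw [dist_eq_norm, dist_eq_norm]; exact hN u v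
  have hγ₂₁ : Real.exp γ₂ ≤ Real.exp γ₁ := Real.exp_le_exp.2 hγ
  obtain ⟨s₂, hα₂s₂, hs₂, hκ₂⟩ :=
    ChenHaleTan.exists_lt_gap_lt_one hγ₂ (hγ₂₁.trans_lt hγ₁) (hgap _ ⟨le_rfl, hγ₂₁⟩)
  have hs₂0 : 0 < s₂ := hα₂.trans_lt hα₂s₂
  have hs₂₁ : s₂ ≤ Real.exp γ₁ := hs₂.le.trans hγ₂₁
  obtain ⟨φ, hlip, hφ0, hφP₂, hstart, hmem⟩ :=
    hD.exists_graph hNlip hN0 hα₂s₂ hs₂₁ hγ₁ (hgap _ ⟨hγ₂₁, le_rfl⟩) hκ₂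
  refine ⟨φ, hlip, hφ0, hφP₂,
    fun w hw => ChenHaleTan.map_mem_of_isNegSemiorbit hs₂0 hs₂₁ hstart hmem hw,
    fun w hw => ?_, fun u horb hu => ?_⟩
  · obtain ⟨u, M, rfl, horb, hu⟩ := hstart w hw
    exact ⟨u, rfl, ChenHaleTan.mem_of_isNegSemiorbit hmem horb
      (ChenHaleTan.norm_le_mul_inv_pow_mono hs₂0 hs₂₁ hu), horb,
      fun ε hε => ChenHaleTan.exists_exp_bound hu hε⟩
  · obtain ⟨M, hM⟩ := ChenHaleTan.exists_inv_pow_bound hu hs₂0 hs₂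
    exact ChenHaleTan.mem_of_isNegSemiorbit hmem horb hM

/-- Discrete-time core of Theorem 6.1 of the paper (Chen–Hale–Tan): under the
dichotomy hypotheses (H.1)–(H.4) for `F = L + N`, there is a Lipschitz graph
`W` over `range P₁` which is invariant under `F` and is characterized by the
Lyapunov-exponent bounds of negative semiorbits. -/
theorem chen_hale_tan_graph {X : Type*} [NormedAddCommGroup X] [NormedSpace ℝ X]
    [CompleteSpace X]
    (P₁ P₂ : X →L[ℝ] X)
    (hsum : P₁ + P₂ = ContinuousLinearMap.id ℝ X)
    (hP₁ : P₁.comp P₁ = P₁)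
    (hP₁₂ : P₁.comp P₂ = 0)
    (L L' : X →L[ℝ] X)
    (hcomm : L.comp P₁ = P₁.comp L)
    (hL'₁ : (L'.comp L).comp P₁ = P₁)
    (hL'₂ : (L.comp L').comp P₁ = P₁)
    (hL'₃ : (P₁.comp L').comp P₁ = L'.comp P₁)
    (C₁ C₂ α₁ α₂ : ℝ) (hC₁ : 1 ≤ C₁) (hC₂ : 1 ≤ C₂)
    (hα : α₂ < α₁) (hα₂ : 0 ≤ α₂)
    (hdich₁ : ∀ j : ℕ, ‖(L' ^ j).comp P₁‖ ≤ C₁ * (α₁ ^ j)⁻¹)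
    (hdich₂ : ∀ j : ℕ, ‖(L ^ j).comp P₂‖ ≤ C₂ * α₂ ^ j)
    (N : X → X) (ℓ : ℝ) (hℓ : 0 ≤ ℓ)
    (hN : ∀ u v : X, ‖N u - N v‖ ≤ ℓ * ‖u - v‖) (hN0 : N 0 = 0)
    (γ₁ γ₂ : ℝ) (hγ : γ₂ ≤ γ₁)
    (hγ₂ : α₂ < Real.exp γ₂) (hγ₁ : Real.exp γ₁ < α₁)
    (hgap : ∀ s ∈ Set.Icc (Real.exp γ₂) (Real.exp γ₁),
      (C₁ / (α₁ - s) + C₂ / (s - α₂)) * ℓ < 1) :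
    ∃ φ : X → X,
      (∃ K : ℝ, ∀ u ∈ Set.range ⇑P₁, ∀ v ∈ Set.range ⇑P₁,
        ‖φ u - φ v‖ ≤ K * ‖u - v‖) ∧
      φ 0 = 0 ∧
      (∀ v ∈ Set.range ⇑P₁, φ v ∈ Set.range ⇑P₂) ∧
      (∀ w ∈ {w : X | ∃ v ∈ Set.range ⇑P₁, w = v + φ v},
        L w + N w ∈ {w : X | ∃ v ∈ Set.range ⇑P₁, w = v + φ v}) ∧
      (∀ u ∈ {w : X | ∃ v ∈ Set.range ⇑P₁, w = v + φ v},
        ∃ uk : ℕ → X, uk 0 = u ∧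
          (∀ k, uk k ∈ {w : X | ∃ v ∈ Set.range ⇑P₁, w = v + φ v}) ∧
          (∀ k, L (uk (k + 1)) + N (uk (k + 1)) = uk k) ∧
          (∀ ε : ℝ, 0 < ε → ∃ Cb : ℝ, ∀ k : ℕ,
            ‖uk k‖ ≤ Cb * Real.exp ((-γ₁ + ε) * (k : ℝ)))) ∧
      (∀ uk : ℕ → X,
        (∀ k, L (uk (k + 1)) + N (uk (k + 1)) = uk k) →
        (∀ ε : ℝ, 0 < ε → ∃ Cb : ℝ, ∀ k : ℕ,
          ‖uk k‖ ≤ Cb * Real.exp ((-γ₂ + ε) * (k : ℝ))) →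
        ∀ k, uk k ∈ {w : X | ∃ v ∈ Set.range ⇑P₁, w = v + φ v}) :=
  chen_hale_tan_graph_general P₁ P₂ hsum hP₁ hP₁₂ L L' hcomm hL'₁ hL'₂ hL'₃ C₁ C₂ α₁ α₂ hC₁ hC₂ hα₂
    hdich₁ hdich₂ N ℓ hℓ hN hN0 γ₁ γ₂ hγ hγ₂ hγ₁ hgap
end
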